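/- arXiv:1204.3869 — 4 statements merged into one kernel-verified Lean document; each statement's English description precedes it below -/
import Mathlib

section
/- The set 𝔅(X)-indexed family {Q_B : B ∈ 𝔅(X)} is a basis of the vector space 𝒫(X). -/
/-!
Independence is proved by deletion–contraction on the ground set, removing its least element `g`.
If `x_g = 0`, then `g` is externally active for every basis and can simply be deleted. Otherwise,
for a basis `B` avoiding `g`, the element `g` is never externally active, so `Q_B = p_g · Q'_B` with
`Q'_B` computed on the smaller ground set. Substituting along a linear map `f` with kernel `ℝ x_g`
(restriction of polynomials to the hyperplane `p_g = 0`) kills these `Q_B`, and sends `Q_B` for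
`B ∋ g` to the `Q`-polynomial of `B ∖ g` in the contraction `f ∘ X`, because `g ≤ j` for every
other `j` makes external activity survive the contraction.

Spanning: given `p_Y` with `X ∖ Y` spanning, let `B` be the greedy basis of `X ∖ Y`. If some
`z ∈ Y` is externally active, expanding `p_z` in the `p_b` with `b ∈ B`, `b < z`, writes `p_Y` as a
combination of `p_{Y'}` with `Y' = Y - z + b`, whose complements still span and whose index sums
are smaller. Otherwise `Y` is exactly `X ∖ (B ∪ E(B))`, so `p_Y = Q_B`.
-/

noncomputable section

variable {r N : ℕ}

/-- `p_u`, the degree-one polynomial associated with the vector `u ∈ ℝ^r`. -/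
def linPoly {r : ℕ} (u : Fin r → ℝ) : MvPolynomial (Fin r) ℝ :=
  ∑ i, MvPolynomial.C (u i) * MvPolynomial.X i

/-- `p_Y = ∏_{i ∈ Y} p_{X i}` for a sublist `Y` of the list `X`. -/
def prodPoly {r N : ℕ} (X : Fin N → Fin r → ℝ) (Y : Finset (Fin N)) : MvPolynomial (Fin r) ℝ :=
  ∏ i ∈ Y, linPoly (X i)

/-- The pairing `⟨p, f⟩ = (p(∂/∂t₁,…,∂/∂t_r) f)(0)`, written via coefficients:
`⟨p,f⟩ = ∑_α α! · p_α · f_α`. -/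
def pairing {r : ℕ} (p f : MvPolynomial (Fin r) ℝ) : ℝ :=
  ∑ α ∈ p.support, (∏ i, ((α i).factorial : ℝ)) * p.coeff α * f.coeff α

lemma pairing_zero {r : ℕ} (q : MvPolynomial (Fin r) ℝ) : pairing q 0 = 0 := by
  simp [pairing]

lemma pairing_add {r : ℕ} (q f g : MvPolynomial (Fin r) ℝ) :
    pairing q (f + g) = pairing q f + pairing q g := by
  unfold pairing
  rw [← Finset.sum_add_distrib]
  exact Finset.sum_congr rfl fun α _ => by rw [MvPolynomial.coeff_add]; ring

lemma pairing_smul {r : ℕ} (q : MvPolynomial (Fin r) ℝ) (c : ℝ) (f : MvPolynomial (Fin r) ℝ) :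
    pairing q (c • f) = c * pairing q f := by
  unfold pairing
  rw [Finset.mul_sum]
  exact Finset.sum_congr rfl fun α _ => by rw [MvPolynomial.coeff_smul, smul_eq_mul]; ring

/-- The kernel (Macaulay inverse system) of an ideal `I`:
all polynomials annihilated (in the sense of the pairing) by every element of `I`. -/
def kerIdeal {r : ℕ} (I : Ideal (MvPolynomial (Fin r) ℝ)) :
    Submodule ℝ (MvPolynomial (Fin r) ℝ) where
  carrier := {f | ∀ q ∈ I, pairing q f = 0}
  add_mem' := fun hf hg q hq => by
    rw [pairing_add, hf q hq, hg q hq, add_zero]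
  zero_mem' := fun q _ => pairing_zero q
  smul_mem' := fun c f hf q hq => by
    rw [pairing_smul, hf q hq, mul_zero]

section Lists

variable {M : Type*} [AddCommGroup M] [Module ℝ M]

/-- `B ⊆ G` is (the index set of) a sublist of the list `v` restricted to the ground set `G`
that is a basis of the ambient space. -/
def basesOn (v : Fin N → M) (G : Finset (Fin N)) : Set (Finset (Fin N)) :=
  {B | B ⊆ G ∧ LinearIndependent ℝ ((B : Set (Fin N)).restrict v) ∧
    Submodule.span ℝ (v '' (B : Set (Fin N))) = ⊤}

/-- `j` is externally active with respect to the basis `B`: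
`v j ∈ span {v e : e ∈ B, e ≤ j}` and `j ∉ B`. -/
def isExtActive (v : Fin N → M) (B : Finset (Fin N)) (j : Fin N) : Prop :=
  j ∉ B ∧ v j ∈ Submodule.span ℝ (v '' {e : Fin N | e ∈ B ∧ e ≤ j})

open Classical in
/-- The set `E(B)` of externally active elements (within the ground set `G`). -/
def extSetOn (v : Fin N → M) (G B : Finset (Fin N)) : Finset (Fin N) :=
  G.filter (fun j => isExtActive v B j)

/-- `C` is a cocircuit w.r.t. the collection of bases `𝔅`: an inclusion-minimal
sublist of the ground set `G` intersecting every basis in `𝔅`. -/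
def isCocircuitOn (G : Finset (Fin N)) (𝔅 : Set (Finset (Fin N))) (C : Finset (Fin N)) : Prop :=
  C ⊆ G ∧ (∀ B ∈ 𝔅, (C ∩ B).Nonempty) ∧
    ∀ C' ⊆ C, (∀ B ∈ 𝔅, (C' ∩ B).Nonempty) → C' = C

/-- A set of bases `𝔅` of the list `v` has the forward exchange property. -/
def forwardExchange (v : Fin N → M) (𝔅 : Set (Finset (Fin N))) : Prop :=
  ∀ B ∈ 𝔅, ∀ b ∈ B, ∀ j : Fin N,
    v j ∈ Submodule.span ℝ (v '' {e : Fin N | e ∈ B ∧ e ≤ b}) →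
    v j ∉ Submodule.span ℝ (v '' {e : Fin N | e ∈ B ∧ e < b}) →
    ¬ isExtActive v B j →
    insert j (B.erase b) ∈ 𝔅

end Lists

/-- The ideal `𝒥` generated by the cocircuit polynomials `p_C`. -/
def Jideal (X : Fin N → Fin r → ℝ) (G : Finset (Fin N)) (𝔅 : Set (Finset (Fin N))) :
    Ideal (MvPolynomial (Fin r) ℝ) :=
  Ideal.span {p | ∃ C : Finset (Fin N), isCocircuitOn G 𝔅 C ∧ p = prodPoly X C}

/-- The generalised `𝒟`-space: the kernel of the cocircuit ideal. -/
def Dspace (X : Fin N → Fin r → ℝ) (G : Finset (Fin N)) (𝔅 : Set (Finset (Fin N))) :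
    Submodule ℝ (MvPolynomial (Fin r) ℝ) :=
  kerIdeal (Jideal X G 𝔅)

/-- `Q_B := p_{X∖(B ∪ E(B))}` (within the ground set `G`). -/
def QB (X : Fin N → Fin r → ℝ) (G B : Finset (Fin N)) : MvPolynomial (Fin r) ℝ :=
  prodPoly X (G \ (B ∪ extSetOn X G B))

/-- The central `𝒫`-space: the span of `p_Y` over sublists `Y` of `G` whose complement spans. -/
def PspaceOn (X : Fin N → Fin r → ℝ) (G : Finset (Fin N)) :
    Submodule ℝ (MvPolynomial (Fin r) ℝ) :=
  Submodule.span ℝ {p | ∃ Y : Finset (Fin N), Y ⊆ G ∧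
    Submodule.span ℝ (X '' ((G \ Y : Finset (Fin N)) : Set (Fin N))) = ⊤ ∧ p = prodPoly X Y}

/-- The generalised `𝒫`-space `𝒫(X,𝔅') = span {Q_B : B ∈ 𝔅'}`. -/
def PspaceB (X : Fin N → Fin r → ℝ) (G : Finset (Fin N)) (𝔅 : Set (Finset (Fin N))) :
    Submodule ℝ (MvPolynomial (Fin r) ℝ) :=
  Submodule.span ℝ {p | ∃ B ∈ 𝔅, p = QB X G B}

/-- The directional derivative `D_u = ∑ i, uᵢ ∂/∂tᵢ` as a linear map. -/
def dirDeriv {r : ℕ} (u : Fin r → ℝ) :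
    MvPolynomial (Fin r) ℝ →ₗ[ℝ] MvPolynomial (Fin r) ℝ :=
  ∑ i, u i • (MvPolynomial.pderiv i).toLinearMap

end

open MvPolynomial Submodule

section Ring

variable {K V W ι : Type*} [Ring K] [AddCommGroup V] [Module K V] [AddCommGroup W] [Module K W]

theorem LinearIndepOn.union_of_map_eq_zero {v : ι → V} {s t : Set ι} (f : V →ₗ[K] W)
    (ht : LinearIndepOn K v t) (hs : LinearIndepOn K (f ∘ v) s) (hf : ∀ i ∈ t, f (v i) = 0) :
    LinearIndepOn K v (t ∪ s) := by
  have hker : span K (v '' t) ≤ LinearMap.ker f := by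
    rw [span_le]
    rintro - ⟨i, hi, rfl⟩
    exact hf i hi
  exact ht.union_of_quotient (hs.of_comp ((span K (v '' t)).liftQ f hker))

theorem LinearMap.mem_span_image_iff_of_ker_eq {f : V →ₗ[K] W} {a : V}
    (hf : LinearMap.ker f = K ∙ a) (S : Set V) (x : V) :
    f x ∈ span K (f '' S) ↔ x ∈ span K (insert a S) := by
  rw [← map_span, ← mem_comap, comap_map_eq, hf, span_insert, sup_comm]

theorem LinearMap.span_image_eq_top_of_ker_eq {f : V →ₗ[K] W} {a : V} (hf : LinearMap.ker f = K ∙ a)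
    (hsurj : Function.Surjective f) {S : Set V} (hS : span K (insert a S) = ⊤) :
    span K (f '' S) = ⊤ := by
  have hfa : f a = 0 := LinearMap.mem_ker.1 (hf ▸ mem_span_singleton_self a)
  rw [← span_insert_zero, ← hfa, ← Set.image_insert_eq, ← map_span, hS, Submodule.map_top,
    LinearMap.range_eq_top.2 hsurj]

end Ring

section DivisionRing

variable {K V W ι : Type*} [DivisionRing K] [AddCommGroup V] [Module K V] [AddCommGroup W]
  [Module K W]

theorem LinearIndepOn.comp_of_ker_eq {v : ι → V} {s : Set ι} {i : ι} (hi : i ∉ s)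
    (hv : LinearIndepOn K v (insert i s)) {f : V →ₗ[K] W} (hf : LinearMap.ker f = K ∙ v i) :
    LinearIndepOn K (f ∘ v) s := by
  obtain ⟨hs, hvi⟩ := (linearIndepOn_insert hi).1 hv
  have hvi0 : v i ≠ 0 := fun h => hvi (h ▸ zero_mem _)
  refine LinearIndependent.map hs ?_
  rw [hf, disjoint_span_singleton' hvi0, ← Set.image_eq_range]
  exact hvi

theorem linearIndepOn_of_notMem_span_lt [LinearOrder ι] {v : ι → V} (s : Finset ι)
    (h : ∀ i ∈ s, v i ∉ span K (v '' {j | j ∈ s ∧ j < i})) : LinearIndepOn K v s := by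
  classical
  induction s using Finset.induction_on_max with
  | empty => simp
  | insert a s hlt ih =>
    have hmono : ∀ i, v '' {j | j ∈ s ∧ j < i} ⊆ v '' {j | j ∈ insert a s ∧ j < i} :=
      fun i => Set.image_mono fun j hj => ⟨Finset.mem_insert_of_mem hj.1, hj.2⟩
    rw [Finset.coe_insert]
    refine LinearIndepOn.insert (ih fun i hi hspan => ?_) fun hspan => ?_
    · exact h i (Finset.mem_insert_of_mem hi) (span_mono (hmono i) hspan)
    · refine h a (Finset.mem_insert_self a s) (span_mono (Set.image_mono fun j hj => ?_) hspan)
      exact ⟨Finset.mem_insert_of_mem hj, hlt j hj⟩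

theorem span_image_insert_erase_eq_top [DecidableEq ι] {v : ι → V} {B T : Finset ι} {c : ι → K}
    {z b : ι} (hB : span K (v '' B) = ⊤) (hTB : T ⊆ B) (hz : ∑ i ∈ T, c i • v i = v z)
    (hb : b ∈ T) (hc : c b ≠ 0) : span K (v '' ↑(insert z (B.erase b))) = ⊤ := by
  set E := span K (v '' ↑(insert z (B.erase b)))
  have hmem : ∀ i ∈ B, i ≠ b → v i ∈ E := fun i hi hib =>
    subset_span ⟨i, Finset.mem_insert_of_mem (Finset.mem_erase.2 ⟨hib, hi⟩), rfl⟩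
  have hvb : v b = (c b)⁻¹ • (v z - ∑ i ∈ T.erase b, c i • v i) := by
    rw [← hz, ← Finset.add_sum_erase T _ hb, add_sub_cancel_right, smul_smul,
      inv_mul_cancel₀ hc, one_smul]
  rw [eq_top_iff, ← hB, span_le]
  rintro - ⟨i, hi, rfl⟩
  rcases eq_or_ne i b with rfl | hib
  · rw [hvb]
    refine smul_mem _ _ (sub_mem (subset_span ⟨z, Finset.mem_insert_self _ _, rfl⟩) ?_)
    refine sum_mem fun j hj => smul_mem _ _ (hmem j (hTB (Finset.mem_of_mem_erase hj)) ?_)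
    exact Finset.ne_of_mem_erase hj
  · exact hmem i hi hib

end DivisionRing

theorem Submodule.exists_linearMap_pi_ker_eq {K V : Type*} [Field K] [AddCommGroup V] [Module K V]
    [FiniteDimensional K V] (U : Submodule K V) :
    ∃ (s : ℕ) (f : V →ₗ[K] Fin s → K), LinearMap.ker f = U ∧ Function.Surjective f := by
  let e : (V ⧸ U) ≃ₗ[K] Fin (Module.finrank K (V ⧸ U)) → K := LinearEquiv.ofFinrankEq _ _ (by simp)
  refine ⟨_, e.toLinearMap ∘ₗ U.mkQ, ?_, e.surjective.comp U.mkQ_surjective⟩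
  rw [LinearMap.ker_comp, LinearEquiv.ker, comap_bot, ker_mkQ]

section Greedy

variable (K : Type*) {V ι : Type*} [DivisionRing K] [AddCommGroup V] [Module K V] [LinearOrder ι]

open Classical in
noncomputable def greedyBasis (v : ι → V) (S : Finset ι) : Finset ι :=
  S.filter fun j => v j ∉ span K (v '' {e | e ∈ S ∧ e < j})

variable {K} {v : ι → V} {S : Finset ι}

theorem mem_greedyBasis {j : ι} :
    j ∈ greedyBasis K v S ↔ j ∈ S ∧ v j ∉ span K (v '' {e | e ∈ S ∧ e < j}) := by
  classical
  simp only [greedyBasis, Finset.mem_filter]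

theorem greedyBasis_subset : greedyBasis K v S ⊆ S := fun _ hj => (mem_greedyBasis.1 hj).1

theorem linearIndepOn_greedyBasis : LinearIndepOn K v (greedyBasis K v S) := by
  refine linearIndepOn_of_notMem_span_lt _ fun i hi hspan => (mem_greedyBasis.1 hi).2 ?_
  exact span_mono (Set.image_mono fun j => And.imp_left fun hj => greedyBasis_subset hj) hspan

theorem mem_span_greedyBasis [WellFoundedLT ι] {j : ι} (hj : j ∈ S) :
    v j ∈ span K (v '' {e | e ∈ greedyBasis K v S ∧ e ≤ j}) := by
  induction j using WellFoundedLT.induction with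
  | _ j ih =>
  by_cases hjB : j ∈ greedyBasis K v S
  · exact subset_span ⟨j, ⟨hjB, le_rfl⟩, rfl⟩
  have hlt : v j ∈ span K (v '' {e | e ∈ S ∧ e < j}) := by
    by_contra h
    exact hjB (mem_greedyBasis.2 ⟨hj, h⟩)
  refine span_le.2 ?_ hlt
  rintro - ⟨e, ⟨heS, hej⟩, rfl⟩
  exact span_mono (Set.image_mono fun i => And.imp_right fun hie => hie.trans hej.le) (ih e hej heS)

theorem span_image_greedyBasis [WellFoundedLT ι] :
    span K (v '' greedyBasis K v S) = span K (v '' S) := by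
  refine le_antisymm (span_mono (Set.image_mono greedyBasis_subset)) (span_le.2 ?_)
  rintro - ⟨j, hj, rfl⟩
  exact span_mono (Set.image_mono fun e he => he.1) (mem_span_greedyBasis hj)

end Greedy

section Polynomials

variable {r s N : ℕ}

noncomputable def linPolyLinearMap (r : ℕ) : (Fin r → ℝ) →ₗ[ℝ] MvPolynomial (Fin r) ℝ :=
  Fintype.linearCombination ℝ X

theorem linPolyLinearMap_apply (u : Fin r → ℝ) : linPolyLinearMap r u = linPoly u := by
  simp only [linPolyLinearMap, Fintype.linearCombination_apply, linPoly, smul_eq_C_mul]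

theorem linPoly_ne_zero {u : Fin r → ℝ} (hu : u ≠ 0) : linPoly u ≠ 0 := by
  rw [← linPolyLinearMap_apply, linPolyLinearMap, Fintype.linearCombination_apply]
  intro h
  exact hu (funext (Fintype.linearIndependent_iff.1 (linearIndependent_X _ _) u h))

theorem linPoly_zero : linPoly (0 : Fin r → ℝ) = 0 := by
  rw [← linPolyLinearMap_apply, map_zero]

noncomputable def linPolyHom (f : (Fin r → ℝ) →ₗ[ℝ] Fin s → ℝ) :
    MvPolynomial (Fin r) ℝ →ₐ[ℝ] MvPolynomial (Fin s) ℝ :=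
  aeval fun i => linPoly (f (Pi.single i 1))

theorem linPolyHom_linPoly (f : (Fin r → ℝ) →ₗ[ℝ] Fin s → ℝ) (u : Fin r → ℝ) :
    linPolyHom f (linPoly u) = linPoly (f u) := by
  have h : (linPolyHom f).toLinearMap ∘ₗ linPolyLinearMap r = linPolyLinearMap s ∘ₗ f := by
    ext i : 2
    simp [linPolyHom, linPolyLinearMap_apply, linPoly, Pi.single_apply]
  simpa only [LinearMap.comp_apply, AlgHom.toLinearMap_apply, linPolyLinearMap_apply] using
    LinearMap.congr_fun h u

theorem linPolyHom_prodPoly (f : (Fin r → ℝ) →ₗ[ℝ] Fin s → ℝ) (X : Fin N → Fin r → ℝ)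
    (Y : Finset (Fin N)) : linPolyHom f (prodPoly X Y) = prodPoly (f ∘ X) Y := by
  simp only [prodPoly, map_prod, linPolyHom_linPoly, Function.comp_apply]

theorem prodPoly_eq_sum_insert_erase {X : Fin N → Fin r → ℝ} {T Y : Finset (Fin N)} {z : Fin N}
    {c : Fin N → ℝ} (hc : ∑ b ∈ T, c b • X b = X z) (hzY : z ∈ Y) (hTY : Disjoint T Y) :
    prodPoly X Y = ∑ b ∈ T, c b • prodPoly X (insert b (Y.erase z)) := by
  have hlin : linPoly (X z) = ∑ b ∈ T, c b • linPoly (X b) := by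
    simp only [← linPolyLinearMap_apply, ← hc, map_sum, map_smul]
  rw [prodPoly, ← Finset.mul_prod_erase Y _ hzY, hlin, Finset.sum_mul]
  refine Finset.sum_congr rfl fun b hb => ?_
  have hbY : b ∉ Y.erase z := fun h => Finset.disjoint_left.1 hTY hb (Finset.mem_of_mem_erase h)
  rw [prodPoly, Finset.prod_insert hbY, smul_mul_assoc]

end Polynomials

section Bases

variable {N : ℕ} {M W : Type*} [AddCommGroup M] [Module ℝ M] [AddCommGroup W] [Module ℝ W]
  {v : Fin N → M} {G B : Finset (Fin N)} {g : Fin N}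

theorem mem_sdiff_union_extSetOn {j : Fin N} :
    j ∈ G \ (B ∪ extSetOn v G B) ↔
      j ∈ G ∧ j ∉ B ∧ v j ∉ span ℝ (v '' {e | e ∈ B ∧ e ≤ j}) := by
  simp only [extSetOn, Finset.mem_sdiff, Finset.mem_union, Finset.mem_filter]
  unfold isExtActive
  tauto

theorem mem_basesOn_of_mem_insert (hB : B ∈ basesOn v (insert g G)) (hgB : g ∉ B) :
    B ∈ basesOn v G :=
  ⟨(Finset.subset_insert_iff_of_notMem hgB).1 hB.1, hB.2⟩

theorem basesOn_insert_of_eq_zero (hg : v g = 0) : basesOn v (insert g G) = basesOn v G := by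
  refine Set.ext fun B => ⟨fun hB => mem_basesOn_of_mem_insert hB fun hgB => ?_,
    fun hB => ⟨hB.1.trans (Finset.subset_insert g G), hB.2⟩⟩
  exact LinearIndepOn.ne_zero (s := (B : Set (Fin N))) hB.2.1 hgB hg

theorem erase_mem_basesOn (hB : B ∈ basesOn v (insert g G)) (hgB : g ∈ B) {f : M →ₗ[ℝ] W}
    (hf : LinearMap.ker f = ℝ ∙ v g) (hsurj : Function.Surjective f) :
    B.erase g ∈ basesOn (f ∘ v) G := by
  have hB' : (B : Set (Fin N)) = insert g ↑(B.erase g) := by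
    rw [← Finset.coe_insert, Finset.insert_erase hgB]
  obtain ⟨hBG, hli, hspan⟩ := hB
  refine ⟨Finset.subset_insert_iff.1 hBG, ?_, ?_⟩
  · exact LinearIndepOn.comp_of_ker_eq (Finset.notMem_erase g B) (hB' ▸ hli) hf
  · rw [Set.image_comp]
    refine LinearMap.span_image_eq_top_of_ker_eq hf hsurj ?_
    rwa [← Set.image_insert_eq, ← hB']

theorem mem_span_comp_erase_iff {f : M →ₗ[ℝ] W} (hf : LinearMap.ker f = ℝ ∙ v g) (hgB : g ∈ B)
    {j : Fin N} (hgj : g ≤ j) :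
    (f ∘ v) j ∈ span ℝ ((f ∘ v) '' {e | e ∈ B.erase g ∧ e ≤ j}) ↔
      v j ∈ span ℝ (v '' {e | e ∈ B ∧ e ≤ j}) := by
  have hsets : insert g {e | e ∈ B.erase g ∧ e ≤ j} = {e | e ∈ B ∧ e ≤ j} := by
    ext e
    rcases eq_or_ne e g with rfl | heg <;> simp [*]
  rw [Set.image_comp, Function.comp_apply, LinearMap.mem_span_image_iff_of_ker_eq hf,
    ← Set.image_insert_eq, hsets]

end Bases

section Independence

variable {r N : ℕ} {G B : Finset (Fin N)} {g : Fin N}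

theorem QB_insert_of_eq_zero {X : Fin N → Fin r → ℝ} (hg : X g = 0) :
    QB X (insert g G) B = QB X G B := by
  rw [QB, QB]
  congr 1
  ext j
  simp only [mem_sdiff_union_extSetOn, Finset.mem_insert]
  rcases eq_or_ne j g with rfl | hjg
  · simp [hg]
  · simp [hjg]

theorem QB_insert_of_lt {X : Fin N → Fin r → ℝ} (hg : X g ≠ 0) (hgG : ∀ x ∈ G, g < x)
    (hgB : ∀ x ∈ B, g < x) : QB X (insert g G) B = linPoly (X g) * QB X G B := by
  have hgG' : g ∉ G := fun h => lt_irrefl g (hgG g h)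
  have hpassive : insert g G \ (B ∪ extSetOn X (insert g G) B) =
      insert g (G \ (B ∪ extSetOn X G B)) := by
    ext j
    simp only [mem_sdiff_union_extSetOn, Finset.mem_insert]
    rcases eq_or_ne j g with rfl | hjg
    · have hempty : {e | e ∈ B ∧ e ≤ j} = ∅ :=
        Set.eq_empty_of_forall_notMem fun e he => (hgB e he.1).not_ge he.2
      have hjB : j ∉ B := fun h => lt_irrefl j (hgB j h)
      simp [hempty, hg, hjB]
    · simp [hjg]
  rw [QB, hpassive, prodPoly, Finset.prod_insert fun h => hgG' (Finset.mem_sdiff.1 h).1]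
  rfl

theorem linPolyHom_QB_insert_of_mem {s : ℕ} {X : Fin N → Fin r → ℝ}
    {f : (Fin r → ℝ) →ₗ[ℝ] Fin s → ℝ} (hf : LinearMap.ker f = ℝ ∙ X g) (hgG : ∀ x ∈ G, g < x)
    (hgB : g ∈ B) : linPolyHom f (QB X (insert g G) B) = QB (f ∘ X) G (B.erase g) := by
  rw [QB, linPolyHom_prodPoly, QB]
  congr 1
  ext j
  simp only [mem_sdiff_union_extSetOn, Finset.mem_insert]
  rcases eq_or_ne j g with rfl | hjg
  · have hjG : j ∉ G := fun h => lt_irrefl j (hgG j h)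
    simp [hgB, hjG]
  · by_cases hjG : j ∈ G
    · rw [mem_span_comp_erase_iff hf hgB (hgG j hjG).le]
      simp [hjG, hjg]
    · simp [hjG, hjg]

theorem linearIndepOn_QB_insert (hgG : ∀ x ∈ G, g < x)
    (ih : ∀ {r : ℕ} (X : Fin N → Fin r → ℝ), LinearIndepOn ℝ (QB X G) (basesOn X G))
    (X : Fin N → Fin r → ℝ) :
    LinearIndepOn ℝ (QB X (insert g G)) (basesOn X (insert g G)) := by
  by_cases hXg : X g = 0
  · rw [basesOn_insert_of_eq_zero hXg]
    exact (ih X).congr fun B _ => (QB_insert_of_eq_zero hXg).symm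
  obtain ⟨s, f, hker, hsurj⟩ := (ℝ ∙ X g).exists_linearMap_pi_ker_eq
  have hQ : ∀ B ∈ {B ∈ basesOn X (insert g G) | g ∉ B},
      QB X (insert g G) B = linPoly (X g) * QB X G B := fun B ⟨hB, hgB⟩ =>
    QB_insert_of_lt hXg hgG fun x hx =>
      hgG x (Finset.mem_of_mem_insert_of_ne (hB.1 hx) (ne_of_mem_of_not_mem hx hgB))
  have havoid : LinearIndepOn ℝ (QB X (insert g G)) {B ∈ basesOn X (insert g G) | g ∉ B} := by
    have hmul : LinearMap.ker (LinearMap.mulLeft ℝ (linPoly (X g))) = ⊥ :=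
      LinearMap.ker_eq_bot.2 (mul_right_injective₀ (linPoly_ne_zero hXg))
    have hmap : LinearIndepOn ℝ (LinearMap.mulLeft ℝ (linPoly (X g)) ∘ QB X G)
        {B ∈ basesOn X (insert g G) | g ∉ B} :=
      LinearIndependent.map' ((ih X).mono fun B hB => mem_basesOn_of_mem_insert hB.1 hB.2) _ hmul
    exact hmap.congr fun B hB => (hQ B hB).symm
  have hcontain : LinearIndepOn ℝ ((linPolyHom f).toLinearMap ∘ QB X (insert g G))
      {B ∈ basesOn X (insert g G) | g ∈ B} := by
    refine LinearIndepOn.congr (v := QB (f ∘ X) G ∘ fun B => B.erase g) ?_ fun B hB => ?_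
    · refine ((ih (f ∘ X)).mono ?_).comp_of_image ((Finset.erase_injOn' g).mono fun B hB => hB.2)
      rintro - ⟨B, hB, rfl⟩
      exact erase_mem_basesOn hB.1 hB.2 hker hsurj
    · exact (linPolyHom_QB_insert_of_mem hker hgG hB.2).symm
  have hfg : f (X g) = 0 := LinearMap.mem_ker.1 (hker ▸ mem_span_singleton_self (X g))
  refine (havoid.union_of_map_eq_zero _ hcontain fun B hB => ?_).mono fun B hB => ?_
  · simp [hQ B hB, linPolyHom_linPoly, hfg, linPoly_zero]
  · by_cases hgB : g ∈ B
    · exact Or.inr ⟨hB, hgB⟩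
    · exact Or.inl ⟨hB, hgB⟩

end Independence

theorem linearIndepOn_QB {r N : ℕ} (G : Finset (Fin N)) (X : Fin N → Fin r → ℝ) :
    LinearIndepOn ℝ (QB X G) (basesOn X G) := by
  induction G using Finset.induction_on_min generalizing r with
  | empty =>
    have hbases : basesOn X ∅ ⊆ {∅} := fun B hB => Finset.subset_empty.1 hB.1
    refine ((linearIndepOn_singleton_iff ℝ).2 ?_).mono hbases
    simp [QB, prodPoly]
  | insert g G hgG ih => exact linearIndepOn_QB_insert hgG ih X

section Spanning

variable {r N : ℕ} {X : Fin N → Fin r → ℝ} {G Y : Finset (Fin N)}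

theorem prodPoly_mem_span_of_isExtActive {B : Finset (Fin N)} {z : Fin N} (hYG : Y ⊆ G)
    (hB : B ∈ basesOn X G) (hBY : Disjoint B Y) (hzY : z ∈ Y) (hz : isExtActive X B z) :
    prodPoly X Y ∈ span ℝ {p | ∃ Y' ⊆ G, span ℝ (X '' ↑(G \ Y')) = ⊤ ∧
      ∑ i ∈ Y', (i : ℕ) < ∑ i ∈ Y, (i : ℕ) ∧ p = prodPoly X Y'} := by
  set T := B.filter (· ≤ z)
  obtain ⟨c, hc⟩ : ∃ c : Fin N → ℝ, ∑ b ∈ T, c b • X b = X z := by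
    rw [← mem_span_image_finset_iff_exists_fun', Finset.coe_filter]
    exact hz.2
  have hTY : Disjoint T Y := Finset.disjoint_of_subset_left (Finset.filter_subset _ B) hBY
  have hbz : ∀ b ∈ T, b < z := fun b hb =>
    lt_of_le_of_ne (Finset.mem_filter.1 hb).2 fun h => Finset.disjoint_left.1 hTY hb (h ▸ hzY)
  rw [prodPoly_eq_sum_insert_erase hc hzY hTY]
  refine sum_mem fun b hb => ?_
  rcases eq_or_ne (c b) 0 with hcb | hcb
  · simp [hcb]
  refine smul_mem _ _ (subset_span ⟨insert b (Y.erase z), ?_, ?_, ?_, rfl⟩)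
  · exact Finset.insert_subset (hB.1 (Finset.mem_filter.1 hb).1)
      ((Finset.erase_subset z Y).trans hYG)
  · have hspan := span_image_insert_erase_eq_top hB.2.2 (Finset.filter_subset _ B) hc hb hcb
    refine eq_top_iff.2 (hspan.ge.trans (span_mono (Set.image_mono (Finset.coe_subset.2 ?_))))
    intro e he
    simp only [Finset.mem_insert, Finset.mem_erase, Finset.mem_sdiff] at he ⊢
    rcases he with rfl | ⟨heb, heB⟩
    · exact ⟨hYG hzY, by simp [(hbz b hb).ne']⟩
    · exact ⟨hB.1 heB, by simp [heb, Finset.disjoint_left.1 hBY heB]⟩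
  · rw [Finset.sum_insert fun h => Finset.disjoint_left.1 hTY hb (Finset.mem_of_mem_erase h),
      ← Finset.add_sum_erase Y _ hzY]
    exact Nat.add_lt_add_right (hbz b hb) _

theorem prodPoly_mem_PspaceB (hYG : Y ⊆ G) (hY : span ℝ (X '' ↑(G \ Y)) = ⊤) :
    prodPoly X Y ∈ PspaceB X G (basesOn X G) := by
  induction hn : ∑ i ∈ Y, (i : ℕ) using Nat.strong_induction_on generalizing Y with
  | _ n ih =>
  set B := greedyBasis ℝ X (G \ Y)
  have hBGY : B ⊆ G \ Y := greedyBasis_subset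
  have hB : B ∈ basesOn X G :=
    ⟨hBGY.trans Finset.sdiff_subset, linearIndepOn_greedyBasis, span_image_greedyBasis.trans hY⟩
  by_cases hact : ∃ z ∈ Y, isExtActive X B z
  · obtain ⟨z, hzY, hz⟩ := hact
    have hBY : Disjoint B Y := Finset.disjoint_of_subset_left hBGY Finset.sdiff_disjoint
    refine span_le.2 ?_ (prodPoly_mem_span_of_isExtActive hYG hB hBY hzY hz)
    rintro - ⟨Y', hY'G, hY', hlt, rfl⟩
    exact ih _ (hn ▸ hlt) hY'G hY' rfl
  · have hYeq : Y = G \ (B ∪ extSetOn X G B) := by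
      ext j
      rw [mem_sdiff_union_extSetOn]
      refine ⟨fun hj => ⟨hYG hj, fun hjB => (Finset.mem_sdiff.1 (hBGY hjB)).2 hj, fun hspan => ?_⟩,
        fun ⟨hjG, _, hspan⟩ => ?_⟩
      · exact hact ⟨j, hj, fun hjB => (Finset.mem_sdiff.1 (hBGY hjB)).2 hj, hspan⟩
      · by_contra hjY
        exact hspan (mem_span_greedyBasis (Finset.mem_sdiff.2 ⟨hjG, hjY⟩))
    rw [hYeq]
    exact subset_span ⟨B, hB, rfl⟩

end Spanning

theorem QB_mem_PspaceOn {r N : ℕ} {X : Fin N → Fin r → ℝ} {G B : Finset (Fin N)}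
    (hB : B ∈ basesOn X G) : QB X G B ∈ PspaceOn X G := by
  refine subset_span ⟨_, Finset.sdiff_subset, ?_, rfl⟩
  rw [sdiff_sdiff_right_self, eq_top_iff, ← hB.2.2]
  exact span_mono (Set.image_mono (Finset.coe_subset.2
    (Finset.subset_inter hB.1 Finset.subset_union_left)))

theorem PspaceOn_eq_PspaceB {r N : ℕ} (X : Fin N → Fin r → ℝ) (G : Finset (Fin N)) :
    PspaceOn X G = PspaceB X G (basesOn X G) := by
  refine le_antisymm (span_le.2 ?_) (span_le.2 ?_)
  · rintro - ⟨Y, hYG, hY, rfl⟩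
    exact prodPoly_mem_PspaceB hYG hY
  · rintro - ⟨B, hB, rfl⟩
    exact QB_mem_PspaceOn hB

theorem statement0_general {r N : ℕ} (X : Fin N → Fin r → ℝ) :
    ∃ b : Module.Basis ↥(basesOn X Finset.univ) ℝ ↥(PspaceOn X Finset.univ),
      ∀ B : ↥(basesOn X Finset.univ),
        (b B : MvPolynomial (Fin r) ℝ) = QB X Finset.univ B.1 := by
  have hli : LinearIndependent ℝ fun B : basesOn X Finset.univ => QB X Finset.univ B :=
    linearIndepOn_QB Finset.univ X
  have hspan : span ℝ (Set.range fun B : basesOn X Finset.univ => QB X Finset.univ B) =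
      PspaceOn X Finset.univ := by
    rw [PspaceOn_eq_PspaceB, PspaceB]
    congr 1
    ext p
    simp [eq_comm]
  exact ⟨(Module.Basis.span hli).map (LinearEquiv.ofEq _ _ hspan), fun B => by
    simp [Module.Basis.span_apply]⟩

/-- the family `{Q_B : B ∈ 𝔅(X)}` is a basis of `𝒫(X)`. -/
theorem statement0 {r N : ℕ} (X : Fin N → Fin r → ℝ)
    (hX : Submodule.span ℝ (Set.range X) = ⊤) :
    ∃ b : Module.Basis ↥(basesOn X Finset.univ) ℝ ↥(PspaceOn X Finset.univ),
      ∀ B : ↥(basesOn X Finset.univ),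
        (b B : MvPolynomial (Fin r) ℝ) = QB X Finset.univ B.1 :=
  statement0_general X
end

section
/- Let B, D ∈ 𝔅(X) be distinct bases (as sublists of X) with the same number of externally active elements, |E(B)| = |E(D)|. Write D = (d_1,…,d_r) in the order inherited from X and set S_i^D := span(d_1,…,d_i) with S_0^D := {0}. Then there exists i ∈ {1,…,r} such that every x ∈ X∖E(D) with x ∈ S_i^D ∖ S_{i-1}^D satisfies x ∉ B ∪ E(B). -/
/-
If the conclusion failed, then for every `d ∈ D` some `x_j` with `j ∈ B ∪ E(B)` would enter
the flag of `D` exactly at `d`; such a `j` comes no later than `d`, so an exchange argument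
along the flag puts each `x_d` in the span of the elements of `B` up to `d`. Hence
`D ∪ E(D) ⊆ B ∪ E(B)`, and both sides have `r + |E(B)| = r + |E(D)|` elements, so they are
equal. But a basis is recovered greedily from `B ∪ E(B)`, as the elements not in the span of
their predecessors, so `B = D`.
-/

open Finset

section ExternalActivity

variable {M : Type*} [AddCommGroup M] [Module ℝ M] {N : ℕ} {v : Fin N → M}
  {G B D : Finset (Fin N)}

lemma mem_extSetOn_univ {j : Fin N} : j ∈ extSetOn v univ B ↔ isExtActive v B j := by
  simp [extSetOn]

lemma disjoint_extSetOn : Disjoint B (extSetOn v G B) := by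
  classical
  rw [disjoint_right]
  intro j hj
  exact (mem_filter.1 hj).2.1

lemma card_eq_finrank_of_mem_basesOn (hB : B ∈ basesOn v G) : B.card = Module.finrank ℝ M := by
  obtain ⟨-, hli, hsp⟩ := hB
  have hrange : Set.range ((B : Set (Fin N)).domRestrict v) = v '' B := Set.range_domRestrict v _
  rw [Module.finrank_eq_card_basis (Module.Basis.mk hli (hrange ▸ hsp.ge))]
  simp

lemma card_union_extSetOn (hB : B ∈ basesOn v G) :
    (B ∪ extSetOn v G B).card = Module.finrank ℝ M + (extSetOn v G B).card := by
  rw [card_union_of_disjoint disjoint_extSetOn, card_eq_finrank_of_mem_basesOn hB]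

lemma notMem_span_of_linearIndepOn (hB : LinearIndepOn ℝ v (B : Set (Fin N))) {b : Fin N}
    (hb : b ∈ B) {T : Set (Fin N)} (hT : T ⊆ (B : Set (Fin N)) \ {b}) :
    v b ∉ Submodule.span ℝ (v '' T) := fun h =>
  hB.notMem_span hb (Submodule.span_mono (Set.image_mono hT) h)

lemma span_image_le_mono {i j : Fin N} (hij : i ≤ j) :
    Submodule.span ℝ (v '' {e | e ∈ B ∧ e ≤ i}) ≤
      Submodule.span ℝ (v '' {e | e ∈ B ∧ e ≤ j}) :=
  Submodule.span_mono (Set.image_mono fun _ he => ⟨he.1, he.2.trans hij⟩)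

lemma mem_span_le_of_mem_union_extSetOn {j : Fin N} (hj : j ∈ B ∪ extSetOn v G B) :
    v j ∈ Submodule.span ℝ (v '' {e | e ∈ B ∧ e ≤ j}) := by
  classical
  rcases mem_union.1 hj with hjB | hjE
  · exact Submodule.subset_span ⟨j, ⟨hjB, le_rfl⟩, rfl⟩
  · exact (mem_filter.1 hjE).2.2

lemma span_union_extSetOn_lt_le (j : Fin N) :
    Submodule.span ℝ (v '' {e | e ∈ B ∪ extSetOn v G B ∧ e < j}) ≤
      Submodule.span ℝ (v '' {e | e ∈ B ∧ e < j}) := by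
  rw [Submodule.span_le]
  rintro _ ⟨e, ⟨he, hej⟩, rfl⟩
  refine Submodule.span_mono ?_ (mem_span_le_of_mem_union_extSetOn he)
  exact Set.image_mono fun i hi => ⟨hi.1, hi.2.trans_lt hej⟩

lemma mem_iff_mem_union_extSetOn_and_notMem_span (hB : LinearIndepOn ℝ v (B : Set (Fin N)))
    {j : Fin N} :
    j ∈ B ↔ j ∈ B ∪ extSetOn v G B ∧
      v j ∉ Submodule.span ℝ (v '' {e | e ∈ B ∪ extSetOn v G B ∧ e < j}) := by
  classical
  constructor
  · intro hj
    refine ⟨mem_union_left _ hj, fun h => notMem_span_of_linearIndepOn hB hj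
      (T := {e | e ∈ B ∧ e < j}) (fun e he => Set.mem_sdiff_singleton.2 ⟨he.1, he.2.ne⟩)
      (span_union_extSetOn_lt_le j h)⟩
  · rintro ⟨hj, hspan⟩
    by_contra hjB
    have hjE : j ∈ extSetOn v G B := (mem_union.1 hj).resolve_left hjB
    refine hspan (Submodule.span_mono (Set.image_mono fun e he => ?_) (mem_filter.1 hjE).2.2)
    exact ⟨mem_union_left _ he.1, he.2.lt_of_ne fun h => hjB (h ▸ he.1)⟩

lemma eq_of_union_extSetOn_eq (hB : LinearIndepOn ℝ v (B : Set (Fin N)))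
    (hD : LinearIndepOn ℝ v (D : Set (Fin N))) (h : B ∪ extSetOn v G B = D ∪ extSetOn v G D) :
    B = D := by
  ext j
  rw [mem_iff_mem_union_extSetOn_and_notMem_span hB,
    mem_iff_mem_union_extSetOn_and_notMem_span hD, h]

lemma le_of_mem_span_le_of_notMem_extSetOn (hD : LinearIndepOn ℝ v (D : Set (Fin N)))
    {d j : Fin N} (hj : j ∉ extSetOn v univ D)
    (h : v j ∈ Submodule.span ℝ (v '' {e | e ∈ D ∧ e ≤ d})) : j ≤ d := by
  by_contra! hdj
  by_cases hjD : j ∈ D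
  · exact notMem_span_of_linearIndepOn hD hjD (T := {e | e ∈ D ∧ e ≤ d})
      (fun e he => Set.mem_sdiff_singleton.2 ⟨he.1, (he.2.trans_lt hdj).ne⟩) h
  · exact hj (mem_extSetOn_univ.2 ⟨hjD, span_image_le_mono hdj.le h⟩)

lemma setOf_mem_and_le_eq_insert {d : Fin N} (hd : d ∈ D) :
    {e | e ∈ D ∧ e ≤ d} = insert d {e | e ∈ D ∧ e < d} := by
  ext e
  simp only [Set.mem_insert_iff, Set.mem_ofPred_eq, le_iff_eq_or_lt]
  grind

lemma mem_span_le_of_flag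
    (hflag : ∀ d ∈ D, ∃ j ≤ d, v j ∈ Submodule.span ℝ (v '' {e | e ∈ B ∧ e ≤ j}) ∧
      v j ∈ Submodule.span ℝ (v '' {e | e ∈ D ∧ e ≤ d}) ∧
      v j ∉ Submodule.span ℝ (v '' {e | e ∈ D ∧ e < d})) :
    ∀ d ∈ D, v d ∈ Submodule.span ℝ (v '' {e | e ∈ B ∧ e ≤ d}) := by
  intro d
  induction d using WellFoundedLT.induction with
  | _ d ih =>
  intro hd
  obtain ⟨j, hjd, hjB, hjle, hjlt⟩ := hflag d hd
  rw [setOf_mem_and_le_eq_insert hd, Set.image_insert_eq] at hjle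
  refine Submodule.span_le.2 ?_ (mem_span_insert_exchange hjle hjlt)
  rintro _ (rfl | ⟨e, ⟨he, hed⟩, rfl⟩)
  · exact span_image_le_mono hjd hjB
  · exact span_image_le_mono hed.le (ih e hed he)

lemma union_extSetOn_subset
    (hDB : ∀ d ∈ D, v d ∈ Submodule.span ℝ (v '' {e | e ∈ B ∧ e ≤ d})) :
    D ∪ extSetOn v univ D ⊆ B ∪ extSetOn v univ B := by
  intro j hj
  have hspan : v j ∈ Submodule.span ℝ (v '' {e | e ∈ B ∧ e ≤ j}) := by
    refine Submodule.span_le.2 ?_ (mem_span_le_of_mem_union_extSetOn hj)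
    rintro _ ⟨e, ⟨he, hej⟩, rfl⟩
    exact span_image_le_mono hej (hDB e he)
  by_cases hjB : j ∈ B
  · exact mem_union_left _ hjB
  · exact mem_union_right _ (mem_extSetOn_univ.2 ⟨hjB, hspan⟩)

end ExternalActivity

theorem statement5_general {r N : ℕ} (X : Fin N → Fin r → ℝ)
    (B D : Finset (Fin N))
    (hB : B ∈ basesOn X Finset.univ) (hD : D ∈ basesOn X Finset.univ)
    (hne : B ≠ D)
    (hcard : (extSetOn X Finset.univ B).card = (extSetOn X Finset.univ D).card) :
    ∃ d ∈ D, ∀ j : Fin N, j ∉ extSetOn X Finset.univ D →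
      X j ∈ Submodule.span ℝ (X '' {e : Fin N | e ∈ D ∧ e ≤ d}) →
      X j ∉ Submodule.span ℝ (X '' {e : Fin N | e ∈ D ∧ e < d}) →
      j ∉ B ∧ j ∉ extSetOn X Finset.univ B := by
  by_contra! hcon
  have hflag : ∀ d ∈ D, ∃ j ≤ d, X j ∈ Submodule.span ℝ (X '' {e | e ∈ B ∧ e ≤ j}) ∧
      X j ∈ Submodule.span ℝ (X '' {e | e ∈ D ∧ e ≤ d}) ∧
      X j ∉ Submodule.span ℝ (X '' {e | e ∈ D ∧ e < d}) := fun d hd => by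
    obtain ⟨j, hjE, hjle, hjlt, hjB⟩ := hcon d hd
    have hj : j ∈ B ∪ extSetOn X univ B := mem_union.2 (or_iff_not_imp_left.2 hjB)
    exact ⟨j, le_of_mem_span_le_of_notMem_extSetOn hD.2.1 hjE hjle,
      mem_span_le_of_mem_union_extSetOn hj, hjle, hjlt⟩
  have hunion : D ∪ extSetOn X univ D = B ∪ extSetOn X univ B :=
    eq_of_subset_of_card_le (union_extSetOn_subset (mem_span_le_of_flag hflag))
      (by rw [card_union_extSetOn hB, card_union_extSetOn hD, hcard])
  exact hne (eq_of_union_extSetOn_eq hB.2.1 hD.2.1 hunion.symm)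

/-- for distinct bases `B ≠ D` with `|E(B)| = |E(D)|` there is a step
`S_i^D ∖ S_{i-1}^D` of the flag of `D` avoiding `B ∪ E(B)` inside `X ∖ E(D)`. -/
theorem statement5 {r N : ℕ} (X : Fin N → Fin r → ℝ)
    (hX : Submodule.span ℝ (Set.range X) = ⊤)
    (B D : Finset (Fin N))
    (hB : B ∈ basesOn X Finset.univ) (hD : D ∈ basesOn X Finset.univ)
    (hne : B ≠ D)
    (hcard : (extSetOn X Finset.univ B).card = (extSetOn X Finset.univ D).card) :
    ∃ d ∈ D, ∀ j : Fin N, j ∉ extSetOn X Finset.univ D →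
      X j ∈ Submodule.span ℝ (X '' {e : Fin N | e ∈ D ∧ e ≤ d}) →
      X j ∉ Submodule.span ℝ (X '' {e : Fin N | e ∈ D ∧ e < d}) →
      j ∉ B ∧ j ∉ extSetOn X Finset.univ B :=
  statement5_general X B D hB hD hne hcard
end

section
/- For every nonempty subset 𝔅' ⊆ 𝔅(X), dim 𝒟(X,𝔅') ≥ |𝔅'|. -/
/-!
Choose `c ∈ ℝ^N` generically, so that for each `B ∈ 𝔅'` the affine hyperplanes
`⟨x_b, θ⟩ = c_b`, `b ∈ B`, meet in a point `θ_B`, and these points are pairwise distinct. For a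
`𝔅'`-cocircuit `C` the polynomial `∏_{j ∈ C} (p_{x_j} - c_j)` vanishes at every `θ_B`, since `C`
meets `B`, and its top-degree part is `p_C`. Dually, the lowest-degree homogeneous part of every
exponential sum `∑_B a_B exp ⟨θ_B, t⟩` is annihilated by `𝒥(X,𝔅')`, and as the `θ_B` are distinct
these lowest parts span a space of dimension `|𝔅'|`.

`𝒟(X,𝔅')` is finite-dimensional because `s_i ^ |𝔅'| ∈ 𝒥(X,𝔅')`: every basis `B` gives `s_i` as a
combination of the `p_{x_b}`, `b ∈ B`, and a product of one `p_{x_b}` from each basis in `𝔅'` is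
divisible by `p_C` for a cocircuit `C` contained in the chosen indices.
-/

open MvPolynomial Finset Module

noncomputable section

variable {r N : ℕ}

section Homogeneous

variable {σ R : Type*} [CommSemiring R]

lemma sum_homogeneousComponent_of_totalDegree_le {p : MvPolynomial σ R} {n : ℕ}
    (hp : p.totalDegree ≤ n) : ∑ d ∈ range (n + 1), homogeneousComponent d p = p := by
  rw [← sum_subset (range_subset_range.mpr (by omega : p.totalDegree + 1 ≤ n + 1))
    fun d _ hd => homogeneousComponent_eq_zero _ _ (by simp at hd; omega),
    sum_homogeneousComponent]

lemma homogeneousComponent_add_mul {q : MvPolynomial σ R} {e : ℕ} (hq : q.IsHomogeneous e)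
    (T : MvPolynomial σ R) (n : ℕ) :
    homogeneousComponent (e + n) (q * T) = q * homogeneousComponent n T := by
  induction T using MvPolynomial.induction_on' with
  | monomial s a =>
    have hs : (monomial s a).IsHomogeneous s.degree := isHomogeneous_monomial a rfl
    rw [homogeneousComponent_of_mem (hq.mul hs), homogeneousComponent_of_mem hs]
    by_cases h : n = s.degree
    · simp [h]
    · rw [if_neg (by omega), if_neg h, mul_zero]
  | add T₁ T₂ h₁ h₂ => rw [mul_add, map_add, h₁, h₂, map_add, mul_add]

variable (σ R) in
lemma iSupIndep_homogeneousSubmodule : iSupIndep (homogeneousSubmodule σ R) := by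
  classical
  let := MvPolynomial.decomposition (σ := σ) (R := R)
  exact (DirectSum.Decomposition.isInternal _).submodule_iSupIndep

end Homogeneous

section LinearForms

lemma linPoly_eq_sum_smul (u : Fin r → ℝ) : linPoly u = ∑ i, u i • MvPolynomial.X i := by
  simp [linPoly, smul_eq_C_mul]

def linPolyₗ : (Fin r → ℝ) →ₗ[ℝ] MvPolynomial (Fin r) ℝ :=
  Fintype.linearCombination ℝ fun i => MvPolynomial.X i

lemma linPolyₗ_apply (u : Fin r → ℝ) : linPolyₗ u = linPoly u := by
  rw [linPoly_eq_sum_smul, linPolyₗ, Fintype.linearCombination_apply]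

lemma isHomogeneous_linPoly (u : Fin r → ℝ) : (linPoly u).IsHomogeneous 1 :=
  IsHomogeneous.sum _ _ _ fun _ _ => isHomogeneous_C_mul_X _ _

lemma eval_linPoly (u θ : Fin r → ℝ) : eval θ (linPoly u) = u ⬝ᵥ θ := by
  simp [linPoly, dotProduct]

lemma isHomogeneous_prodPoly (X : Fin N → Fin r → ℝ) (Y : Finset (Fin N)) :
    (prodPoly X Y).IsHomogeneous Y.card := by
  simpa [prodPoly] using IsHomogeneous.prod Y (fun j => linPoly (X j)) (fun _ => 1)
    fun j _ => isHomogeneous_linPoly (X j)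

end LinearForms

section Pairing

lemma pairing_comm (p f : MvPolynomial (Fin r) ℝ) : pairing p f = pairing f p := by
  have key : ∀ g h : MvPolynomial (Fin r) ℝ, pairing g h =
      ∑ α ∈ g.support ∪ h.support, (∏ i, ((α i).factorial : ℝ)) * g.coeff α * h.coeff α :=
    fun g h => sum_subset subset_union_left fun α _ hα => by rw [notMem_support_iff.mp hα]; ring
  rw [key, key, union_comm]
  exact sum_congr rfl fun α _ => by ring

def pairingBilin : MvPolynomial (Fin r) ℝ →ₗ[ℝ] MvPolynomial (Fin r) ℝ →ₗ[ℝ] ℝ :=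
  LinearMap.mk₂ ℝ pairing
    (fun p q f => by rw [pairing_comm, pairing_add, pairing_comm f, pairing_comm f])
    (fun c p f => by rw [pairing_comm, pairing_smul, pairing_comm, smul_eq_mul])
    pairing_add (fun c p f => pairing_smul p c f)

@[simp]
lemma pairingBilin_apply (p f : MvPolynomial (Fin r) ℝ) : pairingBilin p f = pairing p f := rfl

lemma pairing_monomial_one (α : Fin r →₀ ℕ) (f : MvPolynomial (Fin r) ℝ) :
    pairing (monomial α 1) f = (∏ i, ((α i).factorial : ℝ)) * f.coeff α := by
  rw [pairing, support_monomial, if_neg one_ne_zero, sum_singleton, coeff_monomial, if_pos rfl,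
    mul_one]

lemma mem_kerIdeal_span {S : Set (MvPolynomial (Fin r) ℝ)} {f : MvPolynomial (Fin r) ℝ}
    (h : ∀ s ∈ S, ∀ g, pairing (g * s) f = 0) : f ∈ kerIdeal (Ideal.span S) := by
  intro q hq
  suffices ∀ g, pairing (g * q) f = 0 by simpa using this 1
  induction hq using Submodule.span_induction with
  | mem s hs => exact h s hs
  | zero => simp [pairing_comm, pairing_zero]
  | add x y _ _ hx hy =>
    intro g
    rw [mul_add, ← pairingBilin_apply, map_add, LinearMap.add_apply, pairingBilin_apply,
      pairingBilin_apply, hx, hy, add_zero]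
  | smul c x _ hx =>
    intro g
    rw [smul_eq_mul, ← mul_assoc]
    exact hx _

end Pairing

section Finiteness

lemma exists_isCocircuitOn_subset (𝔅 : Set (Finset (Fin N))) {Y : Finset (Fin N)}
    (hY : ∀ B ∈ 𝔅, (Y ∩ B).Nonempty) : ∃ Z ⊆ Y, isCocircuitOn univ 𝔅 Z := by
  obtain ⟨Z, hZY, hmin⟩ := exists_minimal_le_of_wellFoundedLT
    (fun Z : Finset (Fin N) => ∀ B ∈ 𝔅, (Z ∩ B).Nonempty) Y hY
  exact ⟨Z, hZY, subset_univ Z, hmin.prop, fun Z' hZ' hZ'𝔅 => le_antisymm hZ' (hmin.2 hZ'𝔅 hZ')⟩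

/-- The chosen indices meet every basis, so they contain a cocircuit `Z`, and `p_Z` divides the
product. -/
lemma prod_linPoly_mem_Jideal (X : Fin N → Fin r → ℝ) (𝔅 : Set (Finset (Fin N))) [Fintype 𝔅]
    (f : 𝔅 → Fin N) (hf : ∀ B : 𝔅, f B ∈ (B : Finset (Fin N))) :
    ∏ B, linPoly (X (f B)) ∈ Jideal X univ 𝔅 := by
  classical
  obtain ⟨Z, hZf, hZ⟩ := exists_isCocircuitOn_subset 𝔅 (Y := univ.image f)
    fun B hB => ⟨f ⟨B, hB⟩, mem_inter.mpr ⟨mem_image_of_mem f (mem_univ _), hf (⟨B, hB⟩ : 𝔅)⟩⟩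
  have hdvd : prodPoly X Z ∣ ∏ B, linPoly (X (f B)) := by
    rw [prod_comp (fun j => linPoly (X j)) f]
    refine (prod_dvd_prod_of_subset Z _ _ hZf).trans (prod_dvd_prod_of_dvd _ _ fun j hj => ?_)
    obtain ⟨B, -, rfl⟩ := mem_image.mp hj
    exact dvd_pow_self _ (card_ne_zero.mpr ⟨B, by simp⟩)
  exact Ideal.mem_of_dvd _ hdvd (Ideal.subset_span ⟨Z, hZ, rfl⟩)

lemma X_mem_span_linPoly (X : Fin N → Fin r → ℝ) {B : Finset (Fin N)}
    (hB : Submodule.span ℝ (X '' B) = ⊤) (i : Fin r) :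
    (MvPolynomial.X i : MvPolynomial (Fin r) ℝ) ∈ Ideal.span ((fun b => linPoly (X b)) '' B) := by
  have hX : linPoly (Pi.single i 1) = MvPolynomial.X i := by simp [linPoly, Pi.single_apply]
  have hi : Pi.single i 1 ∈ Submodule.span ℝ (X '' B) := hB ▸ Submodule.mem_top
  have hspan := Submodule.apply_mem_span_image_of_mem_span linPolyₗ hi
  simp only [Set.image_image, linPolyₗ_apply, hX] at hspan
  exact Submodule.span_le_restrictScalars ℝ _ _ hspan

lemma X_pow_card_mem_Jideal (X : Fin N → Fin r → ℝ) (𝔅 : Set (Finset (Fin N))) [Fintype 𝔅]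
    (h𝔅 : ∀ B ∈ 𝔅, Submodule.span ℝ (X '' B) = ⊤) (i : Fin r) :
    MvPolynomial.X i ^ Fintype.card 𝔅 ∈ Jideal X univ 𝔅 := by
  have hprod : MvPolynomial.X i ^ Fintype.card 𝔅 ∈
      ∏ B : 𝔅, Ideal.span ((fun b => linPoly (X b)) '' (B : Finset (Fin N))) := by
    rw [← card_univ, ← prod_const]
    exact Ideal.prod_mem_prod fun B _ => X_mem_span_linPoly X (h𝔅 B B.2) i
  rw [Ideal.prod_span] at hprod
  refine Ideal.span_le.mpr (fun p hp => ?_) hprod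
  obtain ⟨g, hg, rfl⟩ := (Set.mem_finsetProd _ _ _).mp hp
  choose f hf hfg using fun B => hg (mem_univ B)
  simp_rw [← hfg]
  exact prod_linPoly_mem_Jideal X 𝔅 f hf

lemma finiteDimensional_kerIdeal_of_X_pow_mem {I : Ideal (MvPolynomial (Fin r) ℝ)} {k : ℕ}
    (hI : ∀ i, MvPolynomial.X i ^ k ∈ I) : FiniteDimensional ℝ (kerIdeal I) := by
  refine Submodule.finiteDimensional_of_le (S₂ := restrictDegree (Fin r) ℝ k) fun f hf => ?_
  rw [mem_restrictDegree]
  intro α hα i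
  by_contra! hik
  have hmono : monomial α (1 : ℝ) = MvPolynomial.X i ^ k * monomial (α - Finsupp.single i k) 1 := by
    rw [X_pow_eq_monomial, monomial_mul, one_mul,
      add_tsub_cancel_of_le (Finsupp.single_le_iff.mpr hik.le)]
  have hpair := hf _ (hmono ▸ I.mul_mem_right _ (hI i))
  rw [pairing_monomial_one] at hpair
  exact mem_support_iff.mp hα ((mul_eq_zero.mp hpair).resolve_left (by positivity))

lemma finiteDimensional_Dspace (X : Fin N → Fin r → ℝ) (𝔅 : Set (Finset (Fin N)))
    (h𝔅 : ∀ B ∈ 𝔅, Submodule.span ℝ (X '' B) = ⊤) :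
    FiniteDimensional ℝ (Dspace X univ 𝔅) := by
  have := Fintype.ofFinite 𝔅
  exact finiteDimensional_kerIdeal_of_X_pow_mem (X_pow_card_mem_Jideal X 𝔅 h𝔅)

end Finiteness

section LowestParts

variable {K V W : Type*} [Field K] [AddCommGroup V] [Module K V] [AddCommGroup W] [Module K W]

def lowerKernel (w : ℕ → V →ₗ[K] W) (d : ℕ) : Submodule K V :=
  ⨅ (e : ℕ) (_ : e < d), LinearMap.ker (w e)

variable {w : ℕ → V →ₗ[K] W}

lemma mem_lowerKernel {d : ℕ} {v : V} : v ∈ lowerKernel w d ↔ ∀ e < d, w e v = 0 := by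
  simp [lowerKernel]

lemma antitone_lowerKernel : Antitone (lowerKernel w) := fun _ _ hdd' _ hv =>
  mem_lowerKernel.mpr fun e he => mem_lowerKernel.mp hv e (he.trans_le hdd')

lemma lowerKernel_succ (d : ℕ) :
    lowerKernel w (d + 1) = lowerKernel w d ⊓ LinearMap.ker (w d) := by
  ext v
  simp only [Submodule.mem_inf, mem_lowerKernel, LinearMap.mem_ker, Nat.lt_succ_iff_lt_or_eq,
    or_imp, forall_and, forall_eq]

variable [FiniteDimensional K V]

lemma finrank_lowerKernel_eq_add (d : ℕ) :
    finrank K (lowerKernel w d) =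
      finrank K ((lowerKernel w d).map (w d)) + finrank K (lowerKernel w (d + 1)) := by
  rw [← LinearMap.finrank_range_add_finrank_ker ((w d).domRestrict (lowerKernel w d)),
    LinearMap.range_domRestrict, LinearMap.ker_domRestrict, ← Submodule.finrank_map_subtype_eq,
    Submodule.map_comap_subtype, lowerKernel_succ]

lemma exists_lowerKernel_eq_bot (hw : ∀ v, (∀ d, w d v = 0) → v = 0) :
    ∃ n, lowerKernel w n = ⊥ := by
  obtain ⟨n, hn⟩ := IsArtinian.monotone_stabilizes
    ⟨fun d => OrderDual.toDual (lowerKernel w d), fun _ _ h => antitone_lowerKernel h⟩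
  refine ⟨n, (Submodule.eq_bot_iff _).mpr fun v hv => hw v fun e => ?_⟩
  have hv' : v ∈ lowerKernel w (max n (e + 1)) := by
    rwa [← OrderDual.toDual_inj.mp (hn _ (le_max_left _ _))]
  exact mem_lowerKernel.mp hv' e (by omega)

/-- The lowest nonzero graded parts of an injective map `v ↦ (w d v)_d` into a graded space span
a space of dimension `finrank V` (the "least space" of de Boor and Ron). -/
theorem finrank_le_of_lowestParts_mem (𝒲 : ℕ → Submodule K W) (h𝒲 : iSupIndep 𝒲)
    (hw𝒲 : ∀ d v, w d v ∈ 𝒲 d) (hw : ∀ v, (∀ d, w d v = 0) → v = 0)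
    (D : Submodule K W) [FiniteDimensional K D] (hD : ∀ d, ∀ v ∈ lowerKernel w d, w d v ∈ D) :
    finrank K V ≤ finrank K D := by
  classical
  let S : ℕ → Submodule K W := fun n => ⨆ d ∈ range n, (lowerKernel w d).map (w d)
  have hSD : ∀ n, S n ≤ D := fun n =>
    iSup₂_le fun d _ => Submodule.map_le_iff_le_comap.mpr fun v hv => hD d v hv
  have hS𝒲 : ∀ n, S n ≤ ⨆ d ∈ range n, 𝒲 d := fun n =>
    iSup₂_mono fun d _ => Submodule.map_le_iff_le_comap.mpr fun v _ => hw𝒲 d v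
  have key : ∀ n, finrank K V ≤ finrank K (lowerKernel w n) + finrank K (S n) := by
    intro n
    induction n with
    | zero =>
      have h0 : lowerKernel w 0 = ⊤ := by ext v; simp [mem_lowerKernel]
      rw [h0, finrank_top]
      exact Nat.le_add_right _ _
    | succ n ih =>
      have : FiniteDimensional K (S n) := Submodule.finiteDimensional_of_le (hSD n)
      have hdisj : Disjoint ((lowerKernel w n).map (w n)) (S n) :=
        ((h𝒲 n).mono_left (Submodule.map_le_iff_le_comap.mpr fun v _ => hw𝒲 n v)).mono_right
          ((hS𝒲 n).trans (biSup_mono fun d hd => (mem_range.mp hd).ne))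
      have hsup := Submodule.finrank_sup_add_finrank_inf_eq ((lowerKernel w n).map (w n)) (S n)
      rw [hdisj.eq_bot, finrank_bot, add_zero] at hsup
      have hS : S (n + 1) = (lowerKernel w n).map (w n) ⊔ S n := by
        simp only [S, range_add_one, Finset.iSup_insert]
      rw [hS, hsup]
      have := finrank_lowerKernel_eq_add (w := w) n
      omega
  obtain ⟨n, hn⟩ := exists_lowerKernel_eq_bot hw
  calc finrank K V ≤ finrank K (lowerKernel w n) + finrank K (S n) := key n
    _ = finrank K (S n) := by rw [hn, finrank_bot, zero_add]
    _ ≤ finrank K D := Submodule.finrank_mono (hSD n)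

end LowestParts

section ExpParts

/-- The degree-`d` part of the exponential `t ↦ exp ⟨θ, t⟩`. -/
def expPart (d : ℕ) (θ : Fin r → ℝ) : MvPolynomial (Fin r) ℝ :=
  ((d.factorial : ℝ))⁻¹ • linPoly θ ^ d

lemma isHomogeneous_expPart (d : ℕ) (θ : Fin r → ℝ) : (expPart d θ).IsHomogeneous d := by
  have := (isHomogeneous_linPoly θ).pow d
  rw [one_mul] at this
  exact Submodule.smul_mem (homogeneousSubmodule (Fin r) ℝ d) _ this

lemma coeff_expPart (d : ℕ) (θ : Fin r → ℝ) (α : Fin r →₀ ℕ) :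
    coeff α (expPart d θ) =
      if α.degree = d then (α.prod fun i m => θ i ^ m) / ∏ i, ((α i).factorial : ℝ) else 0 := by
  rw [expPart, coeff_smul, linPoly_eq_sum_smul, coeff_linearCombination_X_pow_of_fintype,
    show (α.sum fun _ m => m) = α.degree from rfl]
  split_ifs with h
  · rw [Finsupp.multinomial_eq_of_support_subset (subset_univ _)]
    have hspec : (∏ i, ((α i).factorial : ℝ)) * Nat.multinomial univ α = d.factorial := by
      rw [← h, Finsupp.degree_eq_sum]
      exact_mod_cast Nat.multinomial_spec univ α
    have hmul : (0 : ℝ) < Nat.multinomial univ α := by exact_mod_cast Nat.multinomial_pos _ _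
    have hpos : (0 : ℝ) < ∏ i, ((α i).factorial : ℝ) := prod_pos fun i _ => by positivity
    rw [smul_eq_mul, ← hspec]
    field_simp
  · simp

lemma pairing_expPart (p : MvPolynomial (Fin r) ℝ) (d : ℕ) (θ : Fin r → ℝ) :
    pairing p (expPart d θ) = eval θ (homogeneousComponent d p) := by
  rw [homogeneousComponent_apply, map_sum, pairing, sum_filter]
  refine sum_congr rfl fun α _ => ?_
  rw [coeff_expPart, eval_monomial]
  split_ifs
  · have hpos : (0 : ℝ) < ∏ i, ((α i).factorial : ℝ) := prod_pos fun i _ => by positivity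
    field_simp
  · ring

variable {ι : Type*} [Fintype ι]

def expCombo (θ : ι → Fin r → ℝ) (d : ℕ) : (ι → ℝ) →ₗ[ℝ] MvPolynomial (Fin r) ℝ :=
  Fintype.linearCombination ℝ fun i => expPart d (θ i)

lemma expCombo_mem_homogeneousSubmodule (θ : ι → Fin r → ℝ) (d : ℕ) (a : ι → ℝ) :
    expCombo θ d a ∈ homogeneousSubmodule (Fin r) ℝ d := by
  rw [expCombo, Fintype.linearCombination_apply]
  exact Submodule.sum_mem _ fun i _ => Submodule.smul_mem _ _ (isHomogeneous_expPart d (θ i))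

lemma pairing_expCombo (p : MvPolynomial (Fin r) ℝ) (θ : ι → Fin r → ℝ) (d : ℕ) (a : ι → ℝ) :
    pairing p (expCombo θ d a) = ∑ i, a i * eval (θ i) (homogeneousComponent d p) := by
  rw [expCombo, Fintype.linearCombination_apply, ← pairingBilin_apply, map_sum]
  simp [pairing_expPart]

lemma sum_pairing_expCombo {p : MvPolynomial (Fin r) ℝ} {n : ℕ} (hp : p.totalDegree ≤ n)
    (θ : ι → Fin r → ℝ) (a : ι → ℝ) :
    ∑ d ∈ range (n + 1), pairing p (expCombo θ d a) = ∑ i, a i * eval (θ i) p := by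
  conv_rhs => rw [← sum_homogeneousComponent_of_totalDegree_le hp]
  simp_rw [pairing_expCombo, map_sum, mul_sum]
  exact sum_comm

lemma exists_eval_ne_zero_eval_eq_zero {θ : ι → Fin r → ℝ} (hθ : Function.Injective θ) (i₀ : ι) :
    ∃ p : MvPolynomial (Fin r) ℝ, eval (θ i₀) p ≠ 0 ∧ ∀ i ≠ i₀, eval (θ i) p = 0 := by
  classical
  have hcoord : ∀ i : {i // i ≠ i₀}, ∃ k, θ i k ≠ θ i₀ k := fun i => Function.ne_iff.mp (hθ.ne i.2)
  choose k hk using hcoord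
  refine ⟨∏ i, (MvPolynomial.X (k i) - MvPolynomial.C (θ i (k i))), ?_, fun i hi => ?_⟩
  · simp only [map_prod, map_sub, eval_X, eval_C]
    exact prod_ne_zero_iff.mpr fun i _ => sub_ne_zero.mpr (hk i).symm
  · rw [map_prod]
    exact prod_eq_zero (mem_univ ⟨i, hi⟩) (by simp)

lemma eq_zero_of_forall_expCombo_eq_zero {θ : ι → Fin r → ℝ} (hθ : Function.Injective θ)
    {a : ι → ℝ} (ha : ∀ d, expCombo θ d a = 0) : a = 0 := by
  funext i₀
  obtain ⟨p, hp₀, hp⟩ := exists_eval_ne_zero_eval_eq_zero hθ i₀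
  have hmoment := sum_pairing_expCombo (le_refl p.totalDegree) θ a
  simp only [ha, pairing_zero, sum_const_zero] at hmoment
  rw [sum_eq_single i₀ (fun i _ hi => by rw [hp i hi, mul_zero]) (by simp)] at hmoment
  exact (mul_eq_zero.mp hmoment.symm).resolve_right hp₀

end ExpParts

section AffineProducts

def affineProd (X : Fin N → Fin r → ℝ) (c : Fin N → ℝ) (Y : Finset (Fin N)) :
    MvPolynomial (Fin r) ℝ :=
  ∏ j ∈ Y, (linPoly (X j) - MvPolynomial.C (c j))

variable (X : Fin N → Fin r → ℝ) (c : Fin N → ℝ)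

lemma eval_affineProd_eq_zero {Y : Finset (Fin N)} {θ : Fin r → ℝ} {j : Fin N} (hj : j ∈ Y)
    (hθ : X j ⬝ᵥ θ = c j) : eval θ (affineProd X c Y) = 0 := by
  rw [affineProd, map_prod]
  exact prod_eq_zero hj (by rw [map_sub, eval_linPoly, eval_C, hθ, sub_self])

lemma totalDegree_affineProd_le (Y : Finset (Fin N)) :
    (affineProd X c Y).totalDegree ≤ Y.card := by
  have h : ∀ j ∈ Y, (linPoly (X j) - MvPolynomial.C (c j)).totalDegree ≤ 1 := fun j _ =>
    (totalDegree_sub_C_le _ _).trans (isHomogeneous_linPoly (X j)).totalDegree_le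
  exact (totalDegree_finsetProd Y _).trans (by simpa using sum_le_sum h)

lemma homogeneousComponent_card_affineProd (Y : Finset (Fin N)) :
    homogeneousComponent Y.card (affineProd X c Y) = prodPoly X Y := by
  classical
  induction Y using Finset.induction_on with
  | empty => simp [affineProd, prodPoly]
  | insert j Y hj ih =>
    have hlow := homogeneousComponent_eq_zero (Y.card + 1) (affineProd X c Y)
      (by have := totalDegree_affineProd_le X c Y; omega)
    rw [affineProd, prod_insert hj, ← affineProd, card_insert_of_notMem hj, sub_mul, map_sub,
      homogeneousComponent_C_mul, hlow, mul_zero, sub_zero, add_comm,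
      homogeneousComponent_add_mul (isHomogeneous_linPoly _), ih, prodPoly, prodPoly,
      prod_insert hj]

end AffineProducts

section Membership

variable {X : Fin N → Fin r → ℝ} {c : Fin N → ℝ} {ι : Type*} [Fintype ι] {θ : ι → Fin r → ℝ}

/-- `q p_Y` is the top-degree part of `G = q ∏_{j ∈ Y} (p_{x_j} - c_j)`. As `G` vanishes at every
`θ i`, `∑_{e ≤ d} pairing G (expCombo θ e a) = 0`, and the terms with `e < d` vanish by `ha`. -/
lemma pairing_mul_prodPoly_expCombo_eq_zero_of_isHomogeneous {Y : Finset (Fin N)}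
    (hY : ∀ i, ∃ j ∈ Y, X j ⬝ᵥ θ i = c j) {d : ℕ} {a : ι → ℝ}
    (ha : ∀ e < d, expCombo θ e a = 0) {q : MvPolynomial (Fin r) ℝ} {e : ℕ}
    (hq : q.IsHomogeneous e) : pairing (q * prodPoly X Y) (expCombo θ d a) = 0 := by
  have hqY := hq.mul (isHomogeneous_prodPoly X Y)
  rw [pairing_expCombo, homogeneousComponent_of_mem hqY]
  by_cases hd : d = e + Y.card
  swap
  · simp [hd]
  subst hd
  have hGdeg : (q * affineProd X c Y).totalDegree ≤ e + Y.card :=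
    (totalDegree_mul _ _).trans (add_le_add hq.totalDegree_le (totalDegree_affineProd_le X c Y))
  have hG := sum_pairing_expCombo hGdeg θ a
  rw [sum_range_succ, sum_eq_zero fun e' he' => by rw [ha e' (mem_range.mp he'), pairing_zero],
    zero_add, pairing_expCombo, homogeneousComponent_add_mul hq,
    homogeneousComponent_card_affineProd] at hG
  rw [if_pos rfl, hG]
  refine sum_eq_zero fun i _ => ?_
  obtain ⟨j, hj, hθj⟩ := hY i
  rw [map_mul, eval_affineProd_eq_zero X c hj hθj, mul_zero, mul_zero]

lemma pairing_mul_prodPoly_expCombo_eq_zero {Y : Finset (Fin N)}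
    (hY : ∀ i, ∃ j ∈ Y, X j ⬝ᵥ θ i = c j) {d : ℕ} {a : ι → ℝ}
    (ha : ∀ e < d, expCombo θ e a = 0) (g : MvPolynomial (Fin r) ℝ) :
    pairing (g * prodPoly X Y) (expCombo θ d a) = 0 := by
  rw [← sum_homogeneousComponent g, sum_mul, ← pairingBilin_apply, map_sum, LinearMap.sum_apply]
  exact sum_eq_zero fun e _ => pairing_mul_prodPoly_expCombo_eq_zero_of_isHomogeneous hY ha
    (homogeneousComponent_isHomogeneous e g)

lemma expCombo_mem_Dspace {𝔅 : Set (Finset (Fin N))} [Fintype 𝔅] {θ : 𝔅 → Fin r → ℝ}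
    (hθ : ∀ B : 𝔅, ∀ b ∈ (B : Finset (Fin N)), X b ⬝ᵥ θ B = c b) {d : ℕ} {a : 𝔅 → ℝ}
    (ha : a ∈ lowerKernel (expCombo θ) d) : expCombo θ d a ∈ Dspace X univ 𝔅 := by
  refine mem_kerIdeal_span fun _ ⟨Y, hY, hs⟩ g =>
    hs ▸ pairing_mul_prodPoly_expCombo_eq_zero (c := c) (fun B => ?_) (mem_lowerKernel.mp ha) g
  obtain ⟨j, hj⟩ := hY.2.1 B B.2
  exact ⟨j, (mem_inter.mp hj).1, hθ B j (mem_inter.mp hj).2⟩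

end Membership

section GenericPoints

variable (X : Fin N → Fin r → ℝ)

lemma eq_zero_of_forall_dotProduct_eq_zero {B : Finset (Fin N)}
    (hB : Submodule.span ℝ (X '' B) = ⊤) {θ : Fin r → ℝ} (h : ∀ b ∈ B, X b ⬝ᵥ θ = 0) :
    θ = 0 := by
  have key : ∀ v ∈ Submodule.span ℝ (X '' B), v ⬝ᵥ θ = 0 := fun v hv => by
    induction hv using Submodule.span_induction with
    | mem v hv =>
      obtain ⟨b, hb, rfl⟩ := hv
      exact h b hb
    | zero => exact zero_dotProduct θ
    | add u v _ _ hu hv => rw [add_dotProduct, hu, hv, add_zero]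
    | smul a v _ hv => rw [smul_dotProduct, hv, smul_zero]
  exact dotProduct_self_eq_zero.mp (key θ (hB ▸ Submodule.mem_top))

lemma exists_dotProduct_eq {B : Finset (Fin N)} (hB : B ∈ basesOn X univ) (c : Fin N → ℝ) :
    ∃ θ : Fin r → ℝ, ∀ b ∈ B, X b ⬝ᵥ θ = c b := by
  classical
  obtain ⟨-, hli, hspan⟩ := hB
  let bas := Module.Basis.mk hli (by rw [← hspan, Set.image_eq_range]; exact le_rfl)
  let φ := bas.constr ℝ fun b => c b
  refine ⟨fun k => φ fun j => if k = j then 1 else 0, fun b hb => ?_⟩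
  have hφ : φ (X b) = c b := by
    have h := bas.constr_basis ℝ (fun b => c b) ⟨b, hb⟩
    rwa [Module.Basis.mk_apply] at h
  have hsum := LinearMap.pi_apply_eq_sum_univ φ (X b)
  rw [hφ] at hsum
  rw [hsum]
  simp only [dotProduct, smul_eq_mul]

def solvableRHS (Y : Finset (Fin N)) : Submodule ℝ (Fin N → ℝ) where
  carrier := {c | ∃ θ : Fin r → ℝ, ∀ j ∈ Y, X j ⬝ᵥ θ = c j}
  add_mem' := by
    rintro c c' ⟨θ, hθ⟩ ⟨θ', hθ'⟩
    exact ⟨θ + θ', fun j hj => by rw [dotProduct_add, hθ j hj, hθ' j hj, Pi.add_apply]⟩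
  zero_mem' := ⟨0, fun j _ => dotProduct_zero (X j)⟩
  smul_mem' := by
    rintro a c ⟨θ, hθ⟩
    exact ⟨a • θ, fun j hj => by rw [dotProduct_smul, hθ j hj, Pi.smul_apply]⟩

variable {X}

lemma single_notMem_solvableRHS {B B' : Finset (Fin N)} (hB' : B' ∈ basesOn X univ) {b₀ : Fin N}
    (hb₀ : b₀ ∈ B) (hb₀' : b₀ ∉ B') : Pi.single b₀ 1 ∉ solvableRHS X (B ∪ B') := by
  rintro ⟨θ, hθ⟩
  have hθ0 : θ = 0 := eq_zero_of_forall_dotProduct_eq_zero X hB'.2.2 fun b hb => by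
    rw [hθ b (mem_union_right _ hb), Pi.single_eq_of_ne (by rintro rfl; exact hb₀' hb)]
  simpa [hθ0] using hθ b₀ (mem_union_left _ hb₀)

lemma solvableRHS_ne_top {B B' : Finset (Fin N)} (hB : B ∈ basesOn X univ)
    (hB' : B' ∈ basesOn X univ) (hne : B ≠ B') : solvableRHS X (B ∪ B') ≠ ⊤ := by
  intro htop
  by_cases h : B ⊆ B'
  · obtain ⟨b₀, hb₀', hb₀⟩ := exists_of_ssubset (h.ssubset_of_ne hne)
    exact single_notMem_solvableRHS hB hb₀' hb₀ (by rw [union_comm, htop]; trivial)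
  · obtain ⟨b₀, hb₀, hb₀'⟩ := not_subset.mp h
    exact single_notMem_solvableRHS hB' hb₀ hb₀' (by rw [htop]; trivial)

/-- A real vector space is not a finite union of the proper subspaces `solvableRHS X (B ∪ B')`. -/
lemma exists_injective_dotProduct_eq (𝔅 : Set (Finset (Fin N))) (h𝔅 : 𝔅 ⊆ basesOn X univ) :
    ∃ (c : Fin N → ℝ) (θ : 𝔅 → Fin r → ℝ), Function.Injective θ ∧
      ∀ B : 𝔅, ∀ b ∈ (B : Finset (Fin N)), X b ⬝ᵥ θ B = c b := by
  obtain ⟨c, hc⟩ : ∃ c, ∀ p : {p : 𝔅 × 𝔅 // p.1 ≠ p.2},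
      c ∉ solvableRHS X (p.1.1.1 ∪ p.1.2.1) := by
    by_contra! hcover
    obtain ⟨p, hp⟩ := Subspace.exists_eq_top_of_iUnion_eq_univ
      (Set.eq_univ_of_forall fun c => Set.mem_iUnion.mpr (hcover c))
    exact solvableRHS_ne_top (h𝔅 p.1.1.2) (h𝔅 p.1.2.2) (Subtype.coe_injective.ne p.2) hp
  choose θ hθ using fun B : 𝔅 => exists_dotProduct_eq X (h𝔅 B.2) c
  refine ⟨c, θ, fun B B' hBB' => ?_, hθ⟩
  by_contra hne
  exact hc ⟨(B, B'), hne⟩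
    ⟨θ B, fun j hj => (mem_union.mp hj).elim (hθ B j) (hBB' ▸ hθ B' j)⟩

end GenericPoints

end

theorem statement9_general {r N : ℕ} (X : Fin N → Fin r → ℝ)
    (𝔅' : Set (Finset (Fin N)))
    (hsub : 𝔅' ⊆ basesOn X Finset.univ) :
    𝔅'.ncard ≤ Module.finrank ℝ ↥(Dspace X Finset.univ 𝔅') := by
  have := Fintype.ofFinite 𝔅'
  have := finiteDimensional_Dspace X 𝔅' fun B hB => (hsub hB).2.2
  obtain ⟨c, θ, hθ, hsol⟩ := exists_injective_dotProduct_eq 𝔅' hsub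
  calc 𝔅'.ncard = finrank ℝ (𝔅' → ℝ) := by
        rw [Module.finrank_fintype_fun_eq_card, ← Nat.card_eq_fintype_card, Nat.card_coe_set_eq]
    _ ≤ finrank ℝ (Dspace X univ 𝔅') :=
      finrank_le_of_lowestParts_mem (homogeneousSubmodule (Fin r) ℝ)
        (iSupIndep_homogeneousSubmodule _ _) (expCombo_mem_homogeneousSubmodule θ)
        (fun _ => eq_zero_of_forall_expCombo_eq_zero hθ) _
        (fun _ _ => expCombo_mem_Dspace hsol)

/-- `dim 𝒟(X,𝔅') ≥ |𝔅'|` for every nonempty `𝔅' ⊆ 𝔅(X)`. -/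
theorem statement9 {r N : ℕ} (X : Fin N → Fin r → ℝ)
    (hX : Submodule.span ℝ (Set.range X) = ⊤)
    (𝔅' : Set (Finset (Fin N))) (hne : 𝔅'.Nonempty)
    (hsub : 𝔅' ⊆ basesOn X Finset.univ) :
    𝔅'.ncard ≤ Module.finrank ℝ ↥(Dspace X Finset.univ 𝔅') :=
  statement9_general X 𝔅' hsub
end

section
/- Let 𝔅' ⊆ 𝔅(X) be nonempty with the forward exchange property, and for B ∈ 𝔅(X) let R_B ∈ 𝒟(X) be the unique polynomial with ⟨Q_D, R_B⟩ = δ_{D,B} for all D ∈ 𝔅(X). Then for every B ∈ 𝔅' the polynomial R_B lies in 𝒟(X,𝔅'), and {R_B : B ∈ 𝔅'} is a basis of 𝒟(X,𝔅') dual to the basis {Q_B : B ∈ 𝔅'} of 𝒫(X,𝔅'). -/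
namespace Zonotopal

open MvPolynomial Submodule

section Pairing

variable {r : ℕ}

lemma pairing_eq_sum_of_support_subset {q : MvPolynomial (Fin r) ℝ} {s : Finset (Fin r →₀ ℕ)}
    (h : q.support ⊆ s) (f : MvPolynomial (Fin r) ℝ) :
    pairing q f = ∑ α ∈ s, (∏ i, ((α i).factorial : ℝ)) * q.coeff α * f.coeff α :=
  Finset.sum_subset h fun α _ hα => by rw [notMem_support_iff.mp hα]; ring

lemma pairing_add_left (p q f : MvPolynomial (Fin r) ℝ) :
    pairing (p + q) f = pairing p f + pairing q f := by
  rw [pairing_eq_sum_of_support_subset support_add,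
    pairing_eq_sum_of_support_subset Finset.subset_union_left,
    pairing_eq_sum_of_support_subset Finset.subset_union_right, ← Finset.sum_add_distrib]
  exact Finset.sum_congr rfl fun α _ => by rw [coeff_add]; ring

lemma pairing_smul_left (c : ℝ) (q f : MvPolynomial (Fin r) ℝ) :
    pairing (c • q) f = c * pairing q f := by
  rw [pairing_eq_sum_of_support_subset support_smul, pairing, Finset.mul_sum]
  exact Finset.sum_congr rfl fun α _ => by rw [coeff_smul, smul_eq_mul]; ring

noncomputable def pairingₗ : MvPolynomial (Fin r) ℝ →ₗ[ℝ] MvPolynomial (Fin r) ℝ →ₗ[ℝ] ℝ :=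
  LinearMap.mk₂ ℝ pairing pairing_add_left pairing_smul_left pairing_add
    fun c q f => pairing_smul q c f

@[simp]
lemma pairingₗ_apply (q f : MvPolynomial (Fin r) ℝ) : pairingₗ q f = pairing q f := rfl

lemma pairing_monomial (α : Fin r →₀ ℕ) (f : MvPolynomial (Fin r) ℝ) :
    pairing (monomial α 1) f = (∏ i, ((α i).factorial : ℝ)) * f.coeff α := by
  rw [pairing_eq_sum_of_support_subset support_monomial_subset, Finset.sum_singleton,
    coeff_monomial, if_pos rfl, mul_one]

lemma eq_zero_of_forall_pairing_eq_zero {f : MvPolynomial (Fin r) ℝ}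
    (h : ∀ q, pairing q f = 0) : f = 0 := by
  ext α
  have hfac : (∏ i, ((α i).factorial : ℝ)) ≠ 0 :=
    Finset.prod_ne_zero_iff.mpr fun i _ => by exact_mod_cast (α i).factorial_ne_zero
  simpa [pairing_monomial, hfac] using h (monomial α 1)

lemma mem_kerIdeal_iff_le_ker (I : Ideal (MvPolynomial (Fin r) ℝ)) (f : MvPolynomial (Fin r) ℝ) :
    f ∈ kerIdeal I ↔ I.restrictScalars ℝ ≤ LinearMap.ker (pairingₗ.flip f) :=
  Iff.rfl

end Pairing

section Biorthogonal

variable {K V W ι : Type*} [Field K] [AddCommGroup V] [Module K V] [AddCommGroup W] [Module K W]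
  [DecidableEq ι] {P : V →ₗ[K] W →ₗ[K] K} {q : ι → V} {v : ι → W}

lemma apply_sub_sum_of_biorthogonal [Fintype ι]
    (h : ∀ i j, P (q i) (v j) = if i = j then 1 else 0) (w : W) (i : ι) :
    P (q i) (w - ∑ j, P (q j) w • v j) = 0 := by
  simp [h]

lemma linearIndependent_right_of_biorthogonal
    (h : ∀ i j, P (q i) (v j) = if i = j then 1 else 0) : LinearIndependent K v := by
  refine LinearIndependent.of_comp (LinearMap.pi fun i => P (q i)) ?_
  have hcomp : (LinearMap.pi fun i => P (q i)) ∘ v = fun j => Pi.single j (1 : K) := by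
    ext j i
    simp [h, Pi.single_apply]
  rw [hcomp]
  exact Pi.linearIndependent_single_one ι K

lemma linearIndependent_left_of_biorthogonal
    (h : ∀ i j, P (q i) (v j) = if i = j then 1 else 0) : LinearIndependent K q :=
  linearIndependent_right_of_biorthogonal (P := P.flip) (q := v) fun i j => by
    simp [h, eq_comm]

end Biorthogonal

lemma _root_.Submodule.exists_basis_coe_eq {K W ι : Type*} [Field K] [AddCommGroup W] [Module K W]
    {S : Submodule K W} {v : ι → W} (hv : LinearIndependent K v) (hS : S = span K (Set.range v)) :
    ∃ b : Module.Basis ι K S, ∀ i, (b i : W) = v i := by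
  subst hS
  exact ⟨Module.Basis.span hv, fun i => by rw [Module.Basis.span_apply]⟩

section OrderedFamilies

variable {M : Type*} [AddCommGroup M] [Module ℝ M] {N : ℕ} (v : Fin N → M)

lemma linearIndepOn_of_notMem_span_lt {B : Finset (Fin N)}
    (h : ∀ b ∈ B, v b ∉ span ℝ (v '' {a | a ∈ B ∧ a < b})) :
    LinearIndepOn ℝ v (B : Set (Fin N)) := by
  induction B using Finset.induction_on_max with
  | empty => simp
  | insert a s has ih =>
    have has' : a ∉ s := fun ha => lt_irrefl a (has a ha)
    rw [Finset.coe_insert, linearIndepOn_insert (by simpa using has')]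
    refine ⟨ih fun b hb hmem => h b (Finset.mem_insert_of_mem hb) ?_, fun hmem => ?_⟩
    · exact span_mono (Set.image_mono fun x hx => by
        exact ⟨Finset.mem_insert_of_mem hx.1, hx.2⟩) hmem
    · exact h a (Finset.mem_insert_self a s) (span_mono (Set.image_mono fun x hx => by
        exact ⟨Finset.mem_insert_of_mem hx, has x hx⟩) hmem)

open Classical in
noncomputable def greedy (S : Finset (Fin N)) : Finset (Fin N) :=
  S.filter fun i => v i ∉ span ℝ (v '' {a | a ∈ S ∧ a < i})

variable {v}

lemma mem_greedy {S : Finset (Fin N)} {i : Fin N} :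
    i ∈ greedy v S ↔ i ∈ S ∧ v i ∉ span ℝ (v '' {a | a ∈ S ∧ a < i}) := by
  simp only [greedy, Finset.mem_filter]

lemma greedy_subset (S : Finset (Fin N)) : greedy v S ⊆ S := fun _ h => (mem_greedy.mp h).1

lemma span_greedy_lt (S : Finset (Fin N)) (i : Fin N) :
    span ℝ (v '' {a | a ∈ greedy v S ∧ a < i}) = span ℝ (v '' {a | a ∈ S ∧ a < i}) := by
  induction i using WellFoundedLT.induction with
  | _ i ih =>
  refine le_antisymm (span_mono (Set.image_mono fun a ha => by
    exact ⟨greedy_subset S ha.1, ha.2⟩)) ?_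
  rw [span_le]
  rintro - ⟨a, ⟨haS, hai⟩, rfl⟩
  by_cases ha : a ∈ greedy v S
  · exact subset_span ⟨a, ⟨ha, hai⟩, rfl⟩
  · have hmem : v a ∈ span ℝ (v '' {c | c ∈ S ∧ c < a}) := by
      simpa [mem_greedy, haS] using ha
    rw [← ih a hai] at hmem
    exact span_mono (Set.image_mono fun c hc => by exact ⟨hc.1, hc.2.trans hai⟩) hmem

lemma isExtActive_greedy {S : Finset (Fin N)} {s : Fin N} (hs : s ∈ S) (hsg : s ∉ greedy v S) :
    isExtActive v (greedy v S) s := by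
  have hlt : v s ∈ span ℝ (v '' {a | a ∈ greedy v S ∧ a < s}) := by
    rw [span_greedy_lt]
    simpa [mem_greedy, hs] using hsg
  exact ⟨hsg, span_mono (Set.image_mono fun a ha => by exact ⟨ha.1, ha.2.le⟩) hlt⟩

lemma linearIndepOn_greedy (S : Finset (Fin N)) :
    LinearIndepOn ℝ v (greedy v S : Set (Fin N)) :=
  linearIndepOn_of_notMem_span_lt v fun b hb => by
    rw [span_greedy_lt]
    exact (mem_greedy.mp hb).2

lemma span_greedy (S : Finset (Fin N)) :
    span ℝ (v '' (greedy v S : Set (Fin N))) = span ℝ (v '' (S : Set (Fin N))) := by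
  refine le_antisymm (span_mono (Set.image_mono (greedy_subset S))) (span_le.mpr ?_)
  rintro - ⟨s, hs, rfl⟩
  by_cases hsg : s ∈ greedy v S
  · exact subset_span ⟨s, hsg, rfl⟩
  · exact span_mono (Set.image_mono fun a ha => ha.1) (isExtActive_greedy hs hsg).2

lemma greedy_mem_basesOn {S : Finset (Fin N)} (hS : span ℝ (v '' (S : Set (Fin N))) = ⊤) :
    greedy v S ∈ basesOn v Finset.univ :=
  ⟨Finset.subset_univ _, linearIndepOn_greedy S, by rw [span_greedy, hS]⟩

lemma exists_mem_span_le_notMem_span_lt {B : Finset (Fin N)} {x : M}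
    (hx : x ∈ span ℝ (v '' (B : Set (Fin N)))) (hx0 : x ≠ 0) :
    ∃ b ∈ B, x ∈ span ℝ (v '' {e | e ∈ B ∧ e ≤ b}) ∧
      x ∉ span ℝ (v '' {e | e ∈ B ∧ e < b}) := by
  classical
  have hex : ∃ k : ℕ, x ∈ span ℝ (v '' {e | e ∈ B ∧ (e : ℕ) < k}) := ⟨N, by simpa using hx⟩
  obtain ⟨k, hk⟩ : ∃ k, Nat.find hex = k + 1 :=
    Nat.exists_eq_succ_of_ne_zero fun h0 => hx0 (by simpa [h0] using Nat.find_spec hex)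
  have hlt : x ∉ span ℝ (v '' {e | e ∈ B ∧ (e : ℕ) < k}) := Nat.find_min hex (by omega)
  have hle : x ∈ span ℝ (v '' {e | e ∈ B ∧ (e : ℕ) < k + 1}) := hk ▸ Nat.find_spec hex
  obtain ⟨b, hb, rfl⟩ : ∃ b ∈ B, (b : ℕ) = k := by
    by_contra! hno
    have hset : {e | e ∈ B ∧ (e : ℕ) < k} = {e | e ∈ B ∧ (e : ℕ) < k + 1} := by
      ext e
      refine ⟨fun he => ⟨he.1, he.2.trans k.lt_succ_self⟩, fun he => ⟨he.1, ?_⟩⟩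
      have := hno e he.1
      have := he.2
      omega
    exact hlt (hset ▸ hle)
  have hle_set : {e | e ∈ B ∧ e ≤ b} = {e | e ∈ B ∧ (e : ℕ) < b + 1} :=
    Set.ext fun e => and_congr_right fun _ => Fin.le_def.trans Nat.lt_succ_iff.symm
  have hlt_set : {e | e ∈ B ∧ e < b} = {e | e ∈ B ∧ (e : ℕ) < b} :=
    Set.ext fun e => and_congr_right fun _ => Fin.lt_def
  exact ⟨b, hb, hle_set ▸ hle, hlt_set ▸ hlt⟩

lemma not_isExtActive_of_agree_below {B D : Finset (Fin N)}
    (hB : LinearIndepOn ℝ v (B : Set (Fin N))) {a : Fin N} (haB : a ∈ B) (haD : a ∉ D)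
    (hagree : ∀ e < a, e ∈ D → e ∈ B) : ¬ isExtActive v D a := by
  rintro ⟨-, hspan⟩
  refine hB.notMem_span haB (span_mono (Set.image_mono ?_) hspan)
  rintro e ⟨heD, hea⟩
  have hne : e ≠ a := fun h => haD (h ▸ heD)
  exact ⟨hagree e (lt_of_le_of_ne hea hne) heD, hne⟩

lemma eq_of_forall_isExtActive {B D : Finset (Fin N)}
    (hB : LinearIndepOn ℝ v (B : Set (Fin N))) (hD : LinearIndepOn ℝ v (D : Set (Fin N)))
    (hBD : ∀ b ∈ B, b ∉ D → isExtActive v D b) (hDB : ∀ d ∈ D, d ∉ B → isExtActive v B d) :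
    B = D := by
  by_contra hne
  obtain ⟨a, ha, hmin⟩ := (symmDiff B D).exists_min_image id (Finset.symmDiff_nonempty.mpr hne)
  have hagree : ∀ e < a, (e ∈ B ↔ e ∈ D) := fun e hea => by
    by_contra h
    exact (hmin e (by rw [Finset.mem_symmDiff]; tauto)).not_gt hea
  rcases Finset.mem_symmDiff.mp ha with ⟨haB, haD⟩ | ⟨haD, haB⟩
  · exact not_isExtActive_of_agree_below hB haB haD (fun e he => (hagree e he).mpr) (hBD a haB haD)
  · exact not_isExtActive_of_agree_below hD haD haB (fun e he => (hagree e he).mp) (hDB a haD haB)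

end OrderedFamilies

section Exchange

variable {M : Type*} [AddCommGroup M] [Module ℝ M] {N : ℕ} {v : Fin N → M}
  {𝔅 : Set (Finset (Fin N))}

lemma linearIndepOn_of_mem_basesOn {G B : Finset (Fin N)} (hB : B ∈ basesOn v G) :
    LinearIndepOn ℝ v (B : Set (Fin N)) :=
  hB.2.1

lemma sum_val_insert_erase_lt {S : Finset (Fin N)} {a b : Fin N} (ha : a ∉ S) (hb : b ∈ S)
    (hab : a < b) : ∑ i ∈ insert a (S.erase b), (i : ℕ) < ∑ i ∈ S, (i : ℕ) := by
  rw [Finset.sum_insert fun h => ha (Finset.mem_of_mem_erase h), ← Finset.sum_erase_add _ _ hb]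
  have : (a : ℕ) < b := hab
  omega

lemma exists_exchange_of_forwardExchange (hfe : forwardExchange v 𝔅) {B : Finset (Fin N)}
    (hB : B ∈ 𝔅) (hspan : span ℝ (v '' (B : Set (Fin N))) = ⊤) {j : Fin N} (hjB : j ∉ B)
    (hj : ¬ isExtActive v B j) : ∃ b ∈ B, j < b ∧ insert j (B.erase b) ∈ 𝔅 := by
  have hvj : v j ∉ span ℝ (v '' {e | e ∈ B ∧ e ≤ j}) := fun h => hj ⟨hjB, h⟩
  obtain ⟨b, hb, hle, hlt⟩ := exists_mem_span_le_notMem_span_lt (x := v j) (hspan ▸ mem_top)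
    fun h0 => hvj (by rw [h0]; exact zero_mem _)
  refine ⟨b, hb, lt_of_not_ge fun hbj => hvj (span_mono (Set.image_mono fun e he => by
    exact ⟨he.1, he.2.trans hbj⟩) hle), hfe B hB b hb j hle hlt hj⟩

lemma inter_erase_nonempty (hsub : 𝔅 ⊆ basesOn v Finset.univ) (hfe : forwardExchange v 𝔅)
    {Z : Finset (Fin N)} (hZ : ∀ B ∈ 𝔅, (Z ∩ B).Nonempty) {w : Fin N}
    (hw : v w ∈ span ℝ (v '' {a | a ∉ Z ∧ a < w})) {B : Finset (Fin N)} (hB : B ∈ 𝔅) :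
    (Z.erase w ∩ B).Nonempty := by
  induction hs : ∑ i ∈ B, (i : ℕ) using Nat.strong_induction_on generalizing B with
  | _ n ih =>
  by_contra hempty
  have hZB : ∀ e ∈ B, e ∈ Z → e = w := fun e heB heZ => by_contra fun hne =>
    hempty ⟨e, Finset.mem_inter.mpr ⟨Finset.mem_erase.mpr ⟨hne, heZ⟩, heB⟩⟩
  have hwB : w ∈ B := by
    obtain ⟨z, hz⟩ := hZ B hB
    rw [Finset.mem_inter] at hz
    exact hZB z hz.2 hz.1 ▸ hz.2
  have hwU : v w ∉ span ℝ (v '' {e | e ∈ B ∧ e < w}) := fun h =>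
    (linearIndepOn_of_mem_basesOn (hsub hB)).notMem_span hwB
      (span_mono (Set.image_mono fun e he => by exact ⟨he.1, he.2.ne⟩) h)
  -- Exchanging into `B` an earlier vector outside `Z` that escapes the span of `B` below `w`
  -- gives a basis of `𝔅` with smaller index sum that still misses `Z.erase w`.
  obtain ⟨a, ⟨haZ, haw⟩, haU⟩ :
      ∃ a ∈ {a | a ∉ Z ∧ a < w}, v a ∉ span ℝ (v '' {e | e ∈ B ∧ e < w}) := by
    by_contra! h
    exact hwU (span_le.mpr (by rintro - ⟨a, ha, rfl⟩; exact h a ha) hw)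
  have haB : a ∉ B := fun haB => haU (subset_span ⟨a, ⟨haB, haw⟩, rfl⟩)
  have hna : ¬ isExtActive v B a := fun h => haU (span_mono (Set.image_mono fun e he => by
    exact ⟨he.1, he.2.trans_lt haw⟩) h.2)
  obtain ⟨b, hb, hab, hB'⟩ := exists_exchange_of_forwardExchange hfe hB (hsub hB).2.2 haB hna
  obtain ⟨z, hz⟩ := ih _ (hs ▸ sum_val_insert_erase_lt haB hb hab) hB' rfl
  obtain ⟨hzw, hzZ⟩ := Finset.mem_erase.mp (Finset.mem_inter.mp hz).1
  rcases Finset.mem_insert.mp (Finset.mem_inter.mp hz).2 with rfl | hzB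
  · exact haZ hzZ
  · exact hzw (hZB z (Finset.mem_of_mem_erase hzB) hzZ)

lemma mem_of_forall_mem_or_isExtActive (hsub : 𝔅 ⊆ basesOn v Finset.univ)
    (hfe : forwardExchange v 𝔅) {D : Finset (Fin N)} (hD : D ∈ basesOn v Finset.univ)
    {B : Finset (Fin N)} (hB : B ∈ 𝔅) (hBD : ∀ b ∈ B, b ∈ D ∨ isExtActive v D b) : D ∈ 𝔅 := by
  induction hs : ∑ i ∈ B, (i : ℕ) using Nat.strong_induction_on generalizing B with
  | _ n ih =>
  by_cases hex : ∃ d ∈ D, d ∉ B ∧ ¬ isExtActive v B d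
  · obtain ⟨d, hdD, hdB, hd⟩ := hex
    obtain ⟨b, hb, hdb, hB'⟩ := exists_exchange_of_forwardExchange hfe hB (hsub hB).2.2 hdB hd
    refine ih _ (hs ▸ sum_val_insert_erase_lt hdB hb hdb) hB' (fun e he => ?_) rfl
    rcases Finset.mem_insert.mp he with rfl | he
    · exact Or.inl hdD
    · exact hBD e (Finset.mem_of_mem_erase he)
  · push Not at hex
    have hBD' : B = D := eq_of_forall_isExtActive (linearIndepOn_of_mem_basesOn (hsub hB))
      (linearIndepOn_of_mem_basesOn hD)
      (fun b hb hbD => (hBD b hb).resolve_left hbD) hex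
    exact hBD' ▸ hB

end Exchange

section Cocircuits

variable {r N : ℕ} (X : Fin N → Fin r → ℝ)

lemma exists_cocircuit_subset (𝔅 : Set (Finset (Fin N))) {Z : Finset (Fin N)}
    (hZ : ∀ B ∈ 𝔅, (Z ∩ B).Nonempty) : ∃ C ⊆ Z, isCocircuitOn Finset.univ 𝔅 C := by
  obtain ⟨C, hCZ, hC⟩ := exists_minimal_le_of_wellFoundedLT
    (fun C : Finset (Fin N) => ∀ B ∈ 𝔅, (C ∩ B).Nonempty) Z hZ
  exact ⟨C, hCZ, Finset.subset_univ C, hC.1, fun C' hC'C hC' => le_antisymm hC'C (hC.2 hC' hC'C)⟩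

lemma prodPoly_mem_Jideal {𝔅 : Set (Finset (Fin N))} {Z : Finset (Fin N)}
    (hZ : ∀ B ∈ 𝔅, (Z ∩ B).Nonempty) : prodPoly X Z ∈ Jideal X Finset.univ 𝔅 := by
  obtain ⟨C, hCZ, hC⟩ := exists_cocircuit_subset 𝔅 hZ
  rw [prodPoly, ← Finset.prod_sdiff hCZ]
  exact Ideal.mul_mem_left _ _ (Ideal.subset_span ⟨C, hC, rfl⟩)

lemma prodPoly_mem_Jideal_of_span_compl_ne_top {Z : Finset (Fin N)}
    (hZ : span ℝ (X '' (↑Zᶜ : Set (Fin N))) ≠ ⊤) :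
    prodPoly X Z ∈ Jideal X Finset.univ (basesOn X Finset.univ) := by
  refine prodPoly_mem_Jideal X fun D hD => ?_
  by_contra hDZ
  refine hZ (eq_top_iff.mpr (hD.2.2.symm.le.trans (span_mono (Set.image_mono fun d hd => ?_))))
  simpa using fun hdZ => hDZ ⟨d, Finset.mem_inter.mpr ⟨hdZ, hd⟩⟩

lemma Jideal_antitone {𝔅₁ 𝔅₂ : Set (Finset (Fin N))} (h : 𝔅₁ ⊆ 𝔅₂) :
    Jideal X Finset.univ 𝔅₂ ≤ Jideal X Finset.univ 𝔅₁ :=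
  Ideal.span_le.mpr <| by
    rintro - ⟨C, hC, rfl⟩
    exact prodPoly_mem_Jideal X fun B hB => hC.2.1 B (h hB)

lemma QB_mem_Jideal {𝔅 : Set (Finset (Fin N))} (hsub : 𝔅 ⊆ basesOn X Finset.univ)
    (hfe : forwardExchange X 𝔅) {D : Finset (Fin N)} (hD : D ∈ basesOn X Finset.univ)
    (hD𝔅 : D ∉ 𝔅) : QB X Finset.univ D ∈ Jideal X Finset.univ 𝔅 := by
  refine prodPoly_mem_Jideal X fun B hB => ?_
  by_contra hempty
  refine hD𝔅 (mem_of_forall_mem_or_isExtActive hsub hfe hD hB fun b hb => ?_)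
  by_contra! h
  exact hempty ⟨b, Finset.mem_inter.mpr ⟨by simp [extSetOn, h.1, h.2], hb⟩⟩

end Cocircuits

section Reduction

variable {r N : ℕ}

lemma linPoly_add (u w : Fin r → ℝ) : linPoly (u + w) = linPoly u + linPoly w := by
  simp [linPoly, add_mul, Finset.sum_add_distrib]

lemma linPoly_smul (c : ℝ) (u : Fin r → ℝ) : linPoly (c • u) = c • linPoly u := by
  simp [linPoly, Finset.smul_sum, smul_eq_C_mul, mul_assoc]

lemma linPoly_single (i : Fin r) : linPoly (Pi.single i 1) = (X i : MvPolynomial (Fin r) ℝ) := by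
  simp [linPoly, Pi.single_apply]

variable (X : Fin N → Fin r → ℝ)

lemma prodPoly_insert {Z : Finset (Fin N)} {a : Fin N} (ha : a ∉ Z) :
    prodPoly X (insert a Z) = linPoly (X a) * prodPoly X Z :=
  Finset.prod_insert ha

lemma linPoly_mul_prodPoly_mem_span {T : Set (Fin N)} {Z : Finset (Fin N)}
    (hTZ : ∀ a ∈ T, a ∉ Z) {u : Fin r → ℝ} (hu : u ∈ span ℝ (X '' T)) :
    linPoly u * prodPoly X Z ∈ span ℝ ((fun a => prodPoly X (insert a Z)) '' T) := by
  induction hu using span_induction with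
  | mem x hx =>
    obtain ⟨a, ha, rfl⟩ := hx
    rw [← prodPoly_insert X (hTZ a ha)]
    exact subset_span ⟨a, ha, rfl⟩
  | zero => simp [linPoly]
  | add x y _ _ hx hy => rw [linPoly_add, add_mul]; exact add_mem hx hy
  | smul c x _ hx => rw [linPoly_smul, smul_mul_assoc]; exact smul_mem _ c hx

noncomputable def JQspan (𝔅 : Set (Finset (Fin N))) : Submodule ℝ (MvPolynomial (Fin r) ℝ) :=
  (Jideal X Finset.univ (basesOn X Finset.univ)).restrictScalars ℝ ⊔
    span ℝ (QB X Finset.univ '' (basesOn X Finset.univ \ 𝔅))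

variable {X} {𝔅 : Set (Finset (Fin N))}

lemma Jideal_le_JQspan :
    (Jideal X Finset.univ (basesOn X Finset.univ)).restrictScalars ℝ ≤ JQspan X 𝔅 :=
  le_sup_left

lemma QB_mem_JQspan {D : Finset (Fin N)} (hD : D ∈ basesOn X Finset.univ) (hD𝔅 : D ∉ 𝔅) :
    QB X Finset.univ D ∈ JQspan X 𝔅 :=
  mem_sup_right (subset_span ⟨D, ⟨hD, hD𝔅⟩, rfl⟩)

lemma prodPoly_mem_JQspan (hsub : 𝔅 ⊆ basesOn X Finset.univ) (hfe : forwardExchange X 𝔅)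
    {Z : Finset (Fin N)} (hZ : ∀ B ∈ 𝔅, (Z ∩ B).Nonempty) : prodPoly X Z ∈ JQspan X 𝔅 := by
  induction hs : ∑ i ∈ Z, (i : ℕ) using Nat.strong_induction_on generalizing Z with
  | _ n ih =>
  by_cases hspan : span ℝ (X '' (↑Zᶜ : Set (Fin N))) = ⊤
  swap
  · exact Jideal_le_JQspan (prodPoly_mem_Jideal_of_span_compl_ne_top X hspan)
  set B₀ := greedy X Zᶜ
  have hB₀Z : ∀ b ∈ B₀, b ∉ Z := fun b hb => Finset.mem_compl.mp (greedy_subset _ hb)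
  by_cases hW : ∃ w ∈ Z, isExtActive X B₀ w
  · obtain ⟨w, hwZ, hw⟩ := hW
    have hw' : X w ∈ span ℝ (X '' {a | a ∉ Z ∧ a < w}) :=
      span_mono (Set.image_mono fun e he => by
        exact ⟨hB₀Z e he.1, lt_of_le_of_ne he.2 fun h => hB₀Z e he.1 (h ▸ hwZ)⟩) hw.2
    have hmem := linPoly_mul_prodPoly_mem_span X (Z := Z.erase w)
      (fun a ha haZ => ha.1 (Finset.mem_of_mem_erase haZ)) hw'
    rw [prodPoly, ← Finset.mul_prod_erase _ _ hwZ]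
    refine span_le.mpr ?_ hmem
    rintro - ⟨a, ⟨haZ, haw⟩, rfl⟩
    refine ih _ (hs ▸ sum_val_insert_erase_lt haZ hwZ haw) (fun B hB => ?_) rfl
    exact (inter_erase_nonempty hsub hfe hZ hw' hB).mono
      (Finset.inter_subset_inter_right (Finset.subset_insert _ _))
  · push Not at hW
    have hZ_eq : Z = Finset.univ \ (B₀ ∪ extSetOn X Finset.univ B₀) := by
      ext z
      simp only [extSetOn, Finset.mem_sdiff, Finset.mem_univ, Finset.mem_union,
        Finset.mem_filter, true_and, not_or]
      refine ⟨fun hz => ⟨fun h => hB₀Z z h hz, hW z hz⟩, fun ⟨h₁, h₂⟩ => ?_⟩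
      by_contra hz
      exact h₂ (isExtActive_greedy (Finset.mem_compl.mpr hz) h₁)
    have hB₀ : B₀ ∉ 𝔅 := fun h => by
      obtain ⟨z, hz⟩ := hZ _ h
      exact hB₀Z z (Finset.mem_inter.mp hz).2 (Finset.mem_inter.mp hz).1
    have hQ : prodPoly X Z = QB X Finset.univ B₀ := by rw [QB, ← hZ_eq]
    exact hQ ▸ QB_mem_JQspan (greedy_mem_basesOn hspan) hB₀

lemma mul_prodPoly_mem_JQspan (hsub : 𝔅 ⊆ basesOn X Finset.univ) (hfe : forwardExchange X 𝔅)
    (g : MvPolynomial (Fin r) ℝ) {Z : Finset (Fin N)} (hZ : ∀ B ∈ 𝔅, (Z ∩ B).Nonempty) :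
    g * prodPoly X Z ∈ JQspan X 𝔅 := by
  induction g using MvPolynomial.induction_on generalizing Z with
  | C c => rw [← smul_eq_C_mul]; exact smul_mem _ c (prodPoly_mem_JQspan hsub hfe hZ)
  | add p q hp hq => rw [add_mul]; exact add_mem (hp hZ) (hq hZ)
  | mul_X p i hp =>
    by_cases hspan : span ℝ (X '' (↑Zᶜ : Set (Fin N))) = ⊤
    · have hXi := linPoly_mul_prodPoly_mem_span X (Z := Z) (fun a ha => Finset.mem_compl.mp ha)
        (hspan ▸ mem_top : Pi.single i 1 ∈ _)
      rw [linPoly_single] at hXi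
      rw [mul_assoc]
      refine (span_le (p := (JQspan X 𝔅).comap (LinearMap.mulLeft ℝ p))).mpr ?_ hXi
      rintro - ⟨a, -, rfl⟩
      exact hp fun B hB => (hZ B hB).mono
        (Finset.inter_subset_inter_right (Finset.subset_insert _ _))
    · exact Jideal_le_JQspan
        (Ideal.mul_mem_left _ _ (prodPoly_mem_Jideal_of_span_compl_ne_top X hspan))

lemma Jideal_le_JQspan_of_forwardExchange (hsub : 𝔅 ⊆ basesOn X Finset.univ)
    (hfe : forwardExchange X 𝔅) : (Jideal X Finset.univ 𝔅).restrictScalars ℝ ≤ JQspan X 𝔅 := by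
  intro q hq
  obtain ⟨c, hc, rfl⟩ := mem_span_set.mp hq
  refine sum_mem fun p hp => ?_
  obtain ⟨C, hC, rfl⟩ := hc hp
  exact mul_prodPoly_mem_JQspan hsub hfe _ hC.2.1

lemma JQspan_empty : JQspan X ∅ = ⊤ :=
  eq_top_iff.mpr fun g _ => by
    simpa [prodPoly] using mul_prodPoly_mem_JQspan (Set.empty_subset _) (fun B hB => hB.elim) g
      (Z := ∅) fun B hB => hB.elim

lemma JQspan_le_ker {f : MvPolynomial (Fin r) ℝ}
    (hf : f ∈ Dspace X Finset.univ (basesOn X Finset.univ))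
    (hQ : ∀ D ∈ basesOn X Finset.univ, D ∉ 𝔅 → pairing (QB X Finset.univ D) f = 0) :
    JQspan X 𝔅 ≤ LinearMap.ker (pairingₗ.flip f) :=
  sup_le ((mem_kerIdeal_iff_le_ker _ f).mp hf) <| span_le.mpr <| by
    rintro - ⟨D, ⟨hD, hD𝔅⟩, rfl⟩
    exact hQ D hD hD𝔅

lemma mem_Dspace_iff (hsub : 𝔅 ⊆ basesOn X Finset.univ) (hfe : forwardExchange X 𝔅)
    {f : MvPolynomial (Fin r) ℝ} :
    f ∈ Dspace X Finset.univ 𝔅 ↔ f ∈ Dspace X Finset.univ (basesOn X Finset.univ) ∧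
      ∀ D ∈ basesOn X Finset.univ, D ∉ 𝔅 → pairing (QB X Finset.univ D) f = 0 := by
  refine ⟨fun hf => ⟨fun q hq => hf q (Jideal_antitone X hsub hq),
    fun D hD hD𝔅 => hf _ (QB_mem_Jideal X hsub hfe hD hD𝔅)⟩, fun ⟨hf, hQ⟩ => ?_⟩
  exact (mem_kerIdeal_iff_le_ker _ f).mpr
    ((Jideal_le_JQspan_of_forwardExchange hsub hfe).trans (JQspan_le_ker hf hQ))

lemma eq_zero_of_pairing_QB_eq_zero {f : MvPolynomial (Fin r) ℝ}
    (hf : f ∈ Dspace X Finset.univ (basesOn X Finset.univ))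
    (hQ : ∀ D ∈ basesOn X Finset.univ, pairing (QB X Finset.univ D) f = 0) : f = 0 :=
  eq_zero_of_forall_pairing_eq_zero fun _ =>
    JQspan_le_ker (𝔅 := ∅) hf (fun D hD _ => hQ D hD) (by rw [JQspan_empty]; exact mem_top)

lemma eq_zero_of_mem_Dspace (hsub : 𝔅 ⊆ basesOn X Finset.univ) (hfe : forwardExchange X 𝔅)
    {f : MvPolynomial (Fin r) ℝ} (hf : f ∈ Dspace X Finset.univ 𝔅)
    (hQ : ∀ B ∈ 𝔅, pairing (QB X Finset.univ B) f = 0) : f = 0 := by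
  obtain ⟨hfX, hfQ⟩ := (mem_Dspace_iff hsub hfe).mp hf
  exact eq_zero_of_pairing_QB_eq_zero hfX fun D hD => (em (D ∈ 𝔅)).elim (hQ D) (hfQ D hD)

lemma PspaceB_eq_span_range (G : Finset (Fin N)) :
    PspaceB X G 𝔅 = span ℝ (Set.range fun B : 𝔅 => QB X G B) := by
  rw [PspaceB]
  congr 1
  ext p
  simp [eq_comm]

end Reduction

end Zonotopal

theorem statement11_general {r N : ℕ} (X : Fin N → Fin r → ℝ)
    (𝔅' : Set (Finset (Fin N)))
    (hsub : 𝔅' ⊆ basesOn X Finset.univ)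
    (hfe : forwardExchange X 𝔅')
    (R : ↥(basesOn X Finset.univ) → MvPolynomial (Fin r) ℝ)
    (hR : ∀ B : ↥(basesOn X Finset.univ),
      R B ∈ Dspace X Finset.univ (basesOn X Finset.univ) ∧
        ∀ D ∈ basesOn X Finset.univ,
          pairing (QB X Finset.univ D) (R B) = if D = B.1 then 1 else 0) :
    (∀ B : ↥𝔅', R ⟨B.1, hsub B.2⟩ ∈ Dspace X Finset.univ 𝔅') ∧
    (∃ bD : Module.Basis ↥𝔅' ℝ ↥(Dspace X Finset.univ 𝔅'),
      ∀ B : ↥𝔅', (bD B : MvPolynomial (Fin r) ℝ) = R ⟨B.1, hsub B.2⟩) ∧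
    (∃ bP : Module.Basis ↥𝔅' ℝ ↥(PspaceB X Finset.univ 𝔅'),
      ∀ B : ↥𝔅', (bP B : MvPolynomial (Fin r) ℝ) = QB X Finset.univ B.1) := by
  have := Fintype.ofFinite 𝔅'
  set Q : 𝔅' → MvPolynomial (Fin r) ℝ := fun B => QB X Finset.univ B.1
  set v : 𝔅' → MvPolynomial (Fin r) ℝ := fun B => R ⟨B.1, hsub B.2⟩
  have hdual : ∀ B B', Zonotopal.pairingₗ (Q B) (v B') = if B = B' then 1 else 0 := fun B B' => by
    simp [Q, v, (hR _).2 B.1 (hsub B.2), Subtype.ext_iff]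
  have hv : ∀ B, v B ∈ Dspace X Finset.univ 𝔅' := fun B =>
    (Zonotopal.mem_Dspace_iff hsub hfe).mpr ⟨(hR _).1, fun D hD hD' => by
      rw [(hR _).2 D hD, if_neg (by rintro rfl; exact hD' B.2)]⟩
  have hspan : Dspace X Finset.univ 𝔅' = Submodule.span ℝ (Set.range v) := by
    refine le_antisymm (fun f hf => ?_) (Submodule.span_le.mpr (Set.range_subset_iff.mpr hv))
    have hf_eq : f - ∑ B, Zonotopal.pairingₗ (Q B) f • v B = 0 :=
      Zonotopal.eq_zero_of_mem_Dspace hsub hfe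
        (sub_mem hf (sum_mem fun B _ => Submodule.smul_mem _ _ (hv B)))
        fun B hB => Zonotopal.apply_sub_sum_of_biorthogonal hdual f ⟨B, hB⟩
    rw [sub_eq_zero.mp hf_eq]
    exact sum_mem fun B _ => Submodule.smul_mem _ _ (Submodule.subset_span ⟨B, rfl⟩)
  exact ⟨hv,
    Submodule.exists_basis_coe_eq (Zonotopal.linearIndependent_right_of_biorthogonal hdual) hspan,
    Submodule.exists_basis_coe_eq (Zonotopal.linearIndependent_left_of_biorthogonal hdual)
      (Zonotopal.PspaceB_eq_span_range _)⟩

/-- for `𝔅'` with the forward exchange property, the dual-basis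
polynomials `R_B` (`B ∈ 𝔅'`) lie in `𝒟(X,𝔅')` and form a basis of `𝒟(X,𝔅')`
dual to the basis `{Q_B : B ∈ 𝔅'}` of `𝒫(X,𝔅')`. -/
theorem statement11 {r N : ℕ} (X : Fin N → Fin r → ℝ)
    (hX : Submodule.span ℝ (Set.range X) = ⊤)
    (𝔅' : Set (Finset (Fin N))) (hne : 𝔅'.Nonempty)
    (hsub : 𝔅' ⊆ basesOn X Finset.univ)
    (hfe : forwardExchange X 𝔅')
    (R : ↥(basesOn X Finset.univ) → MvPolynomial (Fin r) ℝ)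
    (hR : ∀ B : ↥(basesOn X Finset.univ),
      R B ∈ Dspace X Finset.univ (basesOn X Finset.univ) ∧
        ∀ D ∈ basesOn X Finset.univ,
          pairing (QB X Finset.univ D) (R B) = if D = B.1 then 1 else 0) :
    (∀ B : ↥𝔅', R ⟨B.1, hsub B.2⟩ ∈ Dspace X Finset.univ 𝔅') ∧
    (∃ bD : Module.Basis ↥𝔅' ℝ ↥(Dspace X Finset.univ 𝔅'),
      ∀ B : ↥𝔅', (bD B : MvPolynomial (Fin r) ℝ) = R ⟨B.1, hsub B.2⟩) ∧
    (∃ bP : Module.Basis ↥𝔅' ℝ ↥(PspaceB X Finset.univ 𝔅'),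
      ∀ B : ↥𝔅', (bP B : MvPolynomial (Fin r) ℝ) = QB X Finset.univ B.1) :=
  statement11_general X 𝔅' hsub hfe R hR
end
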